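/- arXiv:2307.15605 — 8 statements merged into one kernel-verified Lean document; each statement's English description precedes it below -/
import Mathlib

section
/- Let G be a finite simple graph on n vertices with no isolated vertex. Then the domination number of G is at most n/2. -/
/-- `D` is a dominating set of `G`: every vertex not in `D` is adjacent to a vertex of `D`. -/
def IsDomSet {V : Type*} (G : SimpleGraph V) (D : Set V) : Prop :=
  ∀ v : V, v ∉ D → ∃ u ∈ D, G.Adj u v

/-- The domination number of `G`: minimum cardinality of a dominating set. -/
noncomputable def domNum {V : Type*} [Fintype V] (G : SimpleGraph V) : ℕ :=
  sInf {k | ∃ D : Set V, IsDomSet G D ∧ D.ncard = k}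


/-- For a finite simple graph `G` on `n` vertices with no isolated vertex,
the domination number of `G` is at most `n / 2`. -/
theorem domNum_le_half_card {V : Type*} [Fintype V] (G : SimpleGraph V)
    (h : ∀ v : V, ∃ u : V, G.Adj v u) :
    2 * domNum G ≤ Fintype.card V := by
  have huniv : IsDomSet G Set.univ := fun v hv => absurd (Set.mem_univ v) hv
  have hne : {k | ∃ D : Set V, IsDomSet G D ∧ D.ncard = k}.Nonempty :=
    ⟨(Set.univ : Set V).ncard, Set.univ, huniv, rfl⟩
  have hmem := Nat.sInf_mem hne
  obtain ⟨D, hD, hcard⟩ := hmem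
  have hcard' : D.ncard = domNum G := hcard
  by_cases hc : IsDomSet G Dᶜ
  · have h1 : domNum G ≤ Dᶜ.ncard := Nat.sInf_le ⟨Dᶜ, hc, rfl⟩
    have h2 : D.ncard + Dᶜ.ncard = Fintype.card V := by
      rw [D.ncard_add_ncard_compl, Nat.card_eq_fintype_card]
    omega
  · unfold IsDomSet at hc
    push_neg at hc
    obtain ⟨v, hv, hvd⟩ := hc
    have hvD : v ∈ D := by simpa using hv
    have hall : ∀ u, G.Adj u v → u ∈ D := fun u hu => by
      by_contra h'; exact hvd u (by simpa using h') hu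
    have hdom : IsDomSet G (D \ {v}) := by
      intro u hu
      by_cases huv : u = v
      · subst huv
        obtain ⟨w, hw⟩ := h u
        refine ⟨w, ⟨hall w hw.symm, ?_⟩, hw.symm⟩
        simp only [Set.mem_singleton_iff]
        rintro rfl; exact G.irrefl hw
      · have huD : u ∉ D := fun h' => hu ⟨h', by simpa using huv⟩
        obtain ⟨w, hwD, hw⟩ := hD u huD
        have hwv : w ≠ v := by rintro rfl; exact huD (hall u hw.symm)
        exact ⟨w, ⟨hwD, by simpa using hwv⟩, hw⟩
    have h1 : domNum G ≤ (D \ {v}).ncard := Nat.sInf_le ⟨_, hdom, rfl⟩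
    have h2 : (D \ {v}).ncard < D.ncard :=
      Set.ncard_diff_singleton_lt_of_mem hvD D.toFinite
    omega
end

section
/- Let T be a tree on an even number n of vertices with domination number γ(T) = n/2. Then T has a perfect matching. -/
open SimpleGraph Set

section Aux

private lemma matching_ncard_le' {V : Type*} [Fintype V] {T : SimpleGraph V} (N : T.Subgraph) :
    N.verts.ncard ≤ Fintype.card V := by
  simpa [Set.ncard_univ] using Set.ncard_le_ncard (Set.subset_univ N.verts) Set.finite_univ

private lemma aux_edge' {V : Type*} [Fintype V] {T : SimpleGraph V} {M : T.Subgraph}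
    (hM : M.IsMatching)
    (hmax : ∀ N : T.Subgraph, N.IsMatching → N.verts.ncard ≤ M.verts.ncard)
    {a b : V} (ha : a ∉ M.verts) (hb : b ∉ M.verts) : ¬ T.Adj a b := by
  intro hab
  have hdisj : Disjoint M.verts ({a, b} : Set V) := by
    rw [Set.disjoint_right]
    intro x hx
    simp only [Set.mem_insert_iff, Set.mem_singleton_iff] at hx
    rcases hx with rfl | rfl <;> assumption
  have hN : (M ⊔ T.subgraphOfAdj hab).IsMatching := by
    refine hM.sup (Subgraph.IsMatching.subgraphOfAdj hab) ?_
    rw [hM.support_eq_verts, (Subgraph.IsMatching.subgraphOfAdj hab).support_eq_verts,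
      subgraphOfAdj_verts]
    exact hdisj
  have hle := hmax _ hN
  rw [Subgraph.verts_sup, subgraphOfAdj_verts,
    Set.ncard_union_eq hdisj M.verts.toFinite (Set.toFinite _), Set.ncard_pair hab.ne] at hle
  omega

private lemma aux_del' {V : Type*} {T : SimpleGraph V} {M : T.Subgraph} (hM : M.IsMatching)
    {w w' : V} (hww' : M.Adj w w') :
    (M.deleteVerts {w, w'}).IsMatching := by
  intro a ha
  rw [Subgraph.deleteVerts_verts] at ha
  have haw : a ≠ w := fun h => ha.2 (by simp [h])
  have haw' : a ≠ w' := fun h => ha.2 (by simp [h])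
  obtain ⟨b, hb, hbu⟩ := hM ha.1
  have hbw : b ≠ w := by
    rintro rfl
    obtain ⟨c, hc, hcu⟩ := hM (M.edge_vert hww')
    exact haw' ((hcu a hb.symm).trans (hcu w' hww').symm)
  have hbw' : b ≠ w' := by
    rintro rfl
    obtain ⟨c, hc, hcu⟩ := hM (M.edge_vert hww'.symm)
    exact haw ((hcu a hb.symm).trans (hcu w hww'.symm).symm)
  refine ⟨b, ?_, ?_⟩
  · show (M.deleteVerts {w, w'}).Adj a b
    rw [Subgraph.deleteVerts_adj]
    refine ⟨ha.1, ha.2, M.edge_vert hb.symm, by simp [hbw, hbw'], hb⟩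
  · intro y hy
    have hy' : (M.deleteVerts {w, w'}).Adj a y := hy
    rw [Subgraph.deleteVerts_adj] at hy'
    exact hbu y hy'.2.2.2.2

private lemma aux_aug' {V : Type*} [Fintype V] {T : SimpleGraph V} {M : T.Subgraph}
    (hM : M.IsMatching)
    (hmax : ∀ N : T.Subgraph, N.IsMatching → N.verts.ncard ≤ M.verts.ncard)
    {w w' u v : V} (hww' : M.Adj w w') (hu : u ∉ M.verts) (hv : v ∉ M.verts)
    (hadju : T.Adj w u) (hadjv : T.Adj w' v) : u = v := by
  by_contra hne
  have hwv : w ∈ M.verts := M.edge_vert hww'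
  have hw'v : w' ∈ M.verts := M.edge_vert hww'.symm
  have hne_ww' : w ≠ w' := (M.adj_sub hww').ne
  have hM₀m := aux_del' hM hww'
  set A : Set V := M.verts \ {w, w'} with hA
  have hAverts : (M.deleteVerts {w, w'}).verts = A := Subgraph.deleteVerts_verts
  have hd1 : Disjoint A ({w, u} : Set V) := by
    rw [Set.disjoint_right]
    intro x hx
    simp only [Set.mem_insert_iff, Set.mem_singleton_iff] at hx
    rcases hx with rfl | rfl
    · simp [hA]
    · intro hxx; exact hu hxx.1
  have hd2 : Disjoint (A ∪ ({w, u} : Set V)) ({w', v} : Set V) := by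
    rw [Set.disjoint_right]
    intro x hx
    simp only [Set.mem_insert_iff, Set.mem_singleton_iff] at hx
    rcases hx with rfl | rfl
    · intro hxx
      rcases hxx with h | h
      · exact h.2 (by simp)
      · simp only [Set.mem_insert_iff, Set.mem_singleton_iff] at h
        rcases h with rfl | rfl
        · exact hne_ww' rfl
        · exact hu hw'v
    · intro hxx
      rcases hxx with h | h
      · exact hv h.1
      · simp only [Set.mem_insert_iff, Set.mem_singleton_iff] at h
        rcases h with rfl | rfl
        · exact hv hwv
        · exact hne rfl
  have h1 : ((M.deleteVerts {w, w'}) ⊔ T.subgraphOfAdj hadju).IsMatching := by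
    refine hM₀m.sup (Subgraph.IsMatching.subgraphOfAdj hadju) ?_
    rwa [hM₀m.support_eq_verts, (Subgraph.IsMatching.subgraphOfAdj hadju).support_eq_verts,
      subgraphOfAdj_verts, hAverts]
  have h2 : (((M.deleteVerts {w, w'}) ⊔ T.subgraphOfAdj hadju) ⊔ T.subgraphOfAdj hadjv).IsMatching := by
    refine h1.sup (Subgraph.IsMatching.subgraphOfAdj hadjv) ?_
    rwa [h1.support_eq_verts, (Subgraph.IsMatching.subgraphOfAdj hadjv).support_eq_verts,
      subgraphOfAdj_verts, Subgraph.verts_sup, hAverts, subgraphOfAdj_verts]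
  have hle := hmax _ h2
  have hwu : w ≠ u := fun h => hu (h ▸ hwv)
  have hw'vne : w' ≠ v := fun h => hv (h ▸ hw'v)
  have hpair : ({w, w'} : Set V) ⊆ M.verts := by
    intro x hx
    simp only [Set.mem_insert_iff, Set.mem_singleton_iff] at hx
    rcases hx with rfl | rfl <;> assumption
  have h2le : 2 ≤ M.verts.ncard := by
    have := Set.ncard_le_ncard hpair M.verts.toFinite
    rwa [Set.ncard_pair hne_ww'] at this
  have hAcard : A.ncard = M.verts.ncard - 2 := by
    rw [hA, Set.ncard_diff hpair, Set.ncard_pair hne_ww']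
  rw [Subgraph.verts_sup, Subgraph.verts_sup, hAverts, subgraphOfAdj_verts, subgraphOfAdj_verts,
    Set.ncard_union_eq hd2 (Set.toFinite _) (Set.toFinite _),
    Set.ncard_union_eq hd1 (Set.toFinite _) (Set.toFinite _),
    Set.ncard_pair hwu, Set.ncard_pair hw'vne, hAcard] at hle
  omega

private lemma prop_helper (q r a b : Prop) (htri : a ∨ b) (hnb : ¬ (a ∧ b)) :
    ((q ∧ ¬r) ∨ ((q ↔ r) ∧ a)) ↔ ¬((r ∧ ¬q) ∨ ((r ↔ q) ∧ b)) := by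
  tauto

end Aux

/-- A tree on an even number `n` of vertices with domination number `n/2`
has a perfect matching. -/
theorem tree_domNum_half_has_perfect_matching
    {V : Type*} [Fintype V] (T : SimpleGraph V) (hT : T.IsTree)
    (heven : Even (Fintype.card V))
    (hdom : 2 * domNum T = Fintype.card V) :
    ∃ M : T.Subgraph, M.IsPerfectMatching := by
  classical
  set S : Set ℕ := {k | ∃ N : T.Subgraph, N.IsMatching ∧ N.verts.ncard = k} with hS
  have h0 : 0 ∈ S :=
    ⟨⊥, fun v hv => by simp [Subgraph.verts_bot] at hv, by simp [Subgraph.verts_bot]⟩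
  have hbdd : ∀ k ∈ S, k ≤ Fintype.card V := by
    rintro k ⟨N, -, rfl⟩; exact matching_ncard_le' N
  obtain ⟨M, hM, hMcard⟩ : sSup S ∈ S := Nat.sSup_mem ⟨0, h0⟩ ⟨_, hbdd⟩
  have hmax : ∀ N : T.Subgraph, N.IsMatching → N.verts.ncard ≤ M.verts.ncard := by
    intro N hN
    rw [hMcard]
    exact le_csSup ⟨_, hbdd⟩ ⟨N, hN, rfl⟩
  by_cases hspan : M.verts = Set.univ
  · exact ⟨M, hM, fun v => hspan ▸ Set.mem_univ v⟩
  exfalso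
  obtain ⟨x₀, hx₀⟩ := Set.ne_univ_iff_exists_notMem _ |>.mp hspan
  letI : LinearOrder V := LinearOrder.lift' (Fintype.equivFin V) (Fintype.equivFin V).injective
  let p : V → V := fun v => if h : v ∈ M.verts then (hM h).choose else v
  have hpadj : ∀ {v}, v ∈ M.verts → M.Adj v (p v) := by
    intro v h; simp only [p, dif_pos h]; exact (hM h).choose_spec.1
  have hpuniq : ∀ {v w}, v ∈ M.verts → M.Adj v w → w = p v := by
    intro v w h hw; simp only [p, dif_pos h]; exact (hM h).choose_spec.2 w hw
  have hpmem : ∀ {v}, v ∈ M.verts → p v ∈ M.verts := fun h => M.edge_vert (hpadj h).symm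
  have hpp : ∀ {v}, v ∈ M.verts → p (p v) = v :=
    fun {v} h => (hpuniq (hpmem h) (hpadj h).symm).symm
  have hpne : ∀ {v}, v ∈ M.verts → v ≠ p v := fun {v} h => (M.adj_sub (hpadj h)).ne
  let Good : V → Prop := fun v => ∃ u, u ∉ M.verts ∧ T.Adj v u
  let D : Set V :=
    {v | v ∈ M.verts ∧ ((Good v ∧ ¬ Good (p v)) ∨ ((Good v ↔ Good (p v)) ∧ v < p v))}
  have hDsub : D ⊆ M.verts := fun v hv => hv.1
  have hone : ∀ {v}, v ∈ M.verts → (v ∈ D ↔ p v ∉ D) := by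
    intro v hv
    have h1 : p (p v) = v := hpp hv
    have h2 : v ≠ p v := hpne hv
    have h3 : p v ∈ M.verts := hpmem hv
    have htri : v < p v ∨ p v < v := lt_or_gt_of_ne h2
    have hnb : ¬ (v < p v ∧ p v < v) := fun ⟨a, b⟩ => absurd (a.trans b) (lt_irrefl v)
    simp only [D, Set.mem_setOf_eq, h1, hv, h3, true_and]
    exact prop_helper _ _ _ _ htri hnb
  have hcard2 : 1 < Fintype.card V := by
    have h1 : 0 < Fintype.card V := Fintype.card_pos_iff.mpr ⟨x₀⟩
    omega
  have hnbr : ∀ z : V, ∃ w, T.Adj z w := by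
    intro z
    obtain ⟨y, hy⟩ := Fintype.exists_ne_of_one_lt_card hcard2 z
    obtain ⟨W⟩ := hT.isConnected.preconnected z y
    have hnil : ¬ W.Nil := Walk.not_nil_of_ne (Ne.symm hy)
    exact ⟨W.getVert 1, W.adj_snd hnil⟩
  have hDdom : IsDomSet T D := by
    intro z hz
    by_cases hzm : z ∈ M.verts
    · exact ⟨p z, by_contra fun hpd => hz ((hone hzm).mpr hpd), M.adj_sub (hpadj hzm).symm⟩
    · obtain ⟨w, hzw⟩ := hnbr z
      have hwm : w ∈ M.verts := by
        by_contra hwm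
        exact aux_edge' hM hmax hzm hwm hzw
      have hgw : Good w := ⟨z, hzm, hzw.symm⟩
      by_cases hwD : w ∈ D
      · exact ⟨w, hwD, hzw.symm⟩
      · have hpwD : p w ∈ D := by
          by_contra h
          exact hwD ((hone hwm).mpr h)
        have hgpw : Good (p w) := by
          by_contra hng
          exact hwD ⟨hwm, Or.inl ⟨hgw, hng⟩⟩
        obtain ⟨u, hum, hpwu⟩ := hgpw
        have hzu : z = u := aux_aug' hM hmax (hpadj hwm) hzm hum hzw.symm hpwu
        exact ⟨p w, hpwD, hzu ▸ hpwu⟩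
  have hinj : Set.InjOn p D := by
    intro a ha b hb hab
    have h := congrArg p hab
    rwa [hpp (hDsub ha), hpp (hDsub hb)] at h
  have himg : p '' D ⊆ M.verts := by
    rintro _ ⟨a, ha, rfl⟩; exact hpmem (hDsub ha)
  have hdisjD : Disjoint D (p '' D) := by
    rw [Set.disjoint_right]
    rintro _ ⟨a, ha, rfl⟩ hpa
    exact ((hone (hDsub ha)).mp ha) hpa
  have hcardD : 2 * D.ncard ≤ M.verts.ncard := by
    have h1 : (D ∪ p '' D).ncard ≤ M.verts.ncard :=
      Set.ncard_le_ncard (Set.union_subset hDsub himg) M.verts.toFinite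
    rw [Set.ncard_union_eq hdisjD (Set.toFinite _) (Set.toFinite _),
      Set.ncard_image_of_injOn hinj] at h1
    omega
  have hdomle : domNum T ≤ D.ncard := Nat.sInf_le ⟨D, hDdom, rfl⟩
  have hlt : M.verts.ncard < Fintype.card V := by
    have h := Set.ncard_lt_ncard (Set.ssubset_univ_iff.mpr hspan) Set.finite_univ
    rwa [Set.ncard_univ, Nat.card_eq_fintype_card] at h
  omega
end

section
/- Let T be a tree on an even number n of vertices with domination number γ(T) = n/2. If D is a minimum dominating set of T, then V(T) \ D is also a minimum dominating set of T. -/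
/-- Let `T` be a tree on an even number `n` of vertices with domination number `n/2`.
If `D` is a minimum dominating set of `T`, then `V(T) \ D` is also a minimum
dominating set of `T`. -/
theorem compl_of_min_dominating_set_is_min_dominating_set
    {V : Type*} [Fintype V] (T : SimpleGraph V) (hT : T.IsTree)
    (heven : Even (Fintype.card V))
    (hdom : 2 * domNum T = Fintype.card V)
    (D : Set V) (hD : IsDomSet T D) (hcard : D.ncard = domNum T) :
    IsDomSet T Dᶜ ∧ Dᶜ.ncard = domNum T := by
  classical
  have hfin : D.Finite := Set.toFinite D
  have hne : Nonempty V := hT.isConnected.nonempty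
  have h1 : 0 < Fintype.card V := Fintype.card_pos
  have hcardV : 1 < Fintype.card V := by
    have hne1 : Fintype.card V ≠ 1 := by
      intro h'; rw [h'] at heven; simp at heven
    omega
  -- every vertex has a neighbor
  have hadj : ∀ v : V, ∃ u, T.Adj u v := by
    intro v
    obtain ⟨u, hu⟩ := Fintype.exists_ne_of_one_lt_card hcardV v
    obtain ⟨p⟩ := hT.isConnected v u
    cases p with
    | nil => exact absurd rfl hu
    | cons h q => exact ⟨_, h.symm⟩
  -- D is a minimal dominating set
  have hmin : ∀ v ∈ D, ¬ IsDomSet T (D \ {v}) := by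
    intro v hv hdom'
    have hle : domNum T ≤ (D \ {v}).ncard := Nat.sInf_le ⟨D \ {v}, hdom', rfl⟩
    have hlt : (D \ {v}).ncard < D.ncard := Set.ncard_diff_singleton_lt_of_mem hv hfin
    omega
  -- Ore's argument: complement of a minimal dominating set is dominating
  have hDc : IsDomSet T Dᶜ := by
    intro v hv
    rw [Set.notMem_compl_iff] at hv
    have h := hmin v hv
    unfold IsDomSet at h
    push_neg at h
    obtain ⟨w, hw1, hw2⟩ := h
    by_cases hwv : w = v
    · subst hwv
      obtain ⟨u, hu⟩ := hadj w
      have hune : u ∉ D := by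
        intro huD
        exact hw2 u ⟨huD, fun he => T.irrefl (he ▸ hu)⟩ hu
      exact ⟨u, hune, hu⟩
    · have hwD : w ∉ D := fun h' => hw1 ⟨h', hwv⟩
      obtain ⟨u, huD, huw⟩ := hD w hwD
      have huv : u = v := by
        by_contra hne'
        exact hw2 u ⟨huD, hne'⟩ huw
      subst huv
      exact ⟨w, hwD, huw.symm⟩
  refine ⟨hDc, ?_⟩
  have hsum : D.ncard + Dᶜ.ncard = Fintype.card V := by
    have := Set.ncard_add_ncard_compl D
    rwa [Nat.card_eq_fintype_card] at this
  omega
end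

section
/- The spectral radius of the corona G ∘ K_1 of a graph G equals (ρ(G) + √(ρ(G)² + 4))/2, where ρ(G) is the spectral radius of G. -/
/-- The spectral radius of a finite simple graph: the largest eigenvalue of its (real)
adjacency matrix, expressed as the supremum of the real spectrum. -/
noncomputable def specRad {V : Type*} [Finite V] (G : SimpleGraph V) : ℝ :=
  letI := Fintype.ofFinite V
  letI := Classical.decEq V
  letI := Classical.decRel G.Adj
  sSup (spectrum ℝ (G.adjMatrix ℝ))

/-- The characteristic polynomial `f(G, x) = det(x I − A(G))` of the adjacency matrix. -/
noncomputable def charPolyG {V : Type*} [Finite V] (G : SimpleGraph V) : Polynomial ℝ :=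
  letI := Fintype.ofFinite V
  letI := Classical.decEq V
  letI := Classical.decRel G.Adj
  (G.adjMatrix ℝ).charpoly


/-- The corona `G ∘ K₁`: to each vertex `v` of `G` (left copy) a new pendant vertex `v'`
(right copy) is attached. -/
def corona {V : Type*} (G : SimpleGraph V) : SimpleGraph (V ⊕ V) :=
  SimpleGraph.fromRel (fun a b =>
    match a, b with
    | Sum.inl u, Sum.inl v => G.Adj u v
    | Sum.inl u, Sum.inr v => u = v
    | _, _ => False)

open Matrix

section Aux

variable {V : Type*} [Fintype V] [DecidableEq V] (G : SimpleGraph V) [DecidableRel G.Adj]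
  [DecidableRel (corona G).Adj]

lemma corona_adjMatrix :
    (corona G).adjMatrix ℝ = Matrix.fromBlocks (G.adjMatrix ℝ) 1 1 0 := by
  ext i j
  rw [SimpleGraph.adjMatrix_apply]
  cases i with
  | inl u =>
    cases j with
    | inl v =>
      simp only [SimpleGraph.adjMatrix_apply, fromBlocks_apply₁₁, corona,
        SimpleGraph.fromRel_adj]
      by_cases h : G.Adj u v
      · simp [h, h.symm, h.ne]
      · have h' : ¬ G.Adj v u := fun hv => h hv.symm
        simp [h, h']
    | inr v =>
      simp only [SimpleGraph.adjMatrix_apply, fromBlocks_apply₁₂, corona,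
        SimpleGraph.fromRel_adj, Matrix.one_apply]
      by_cases h : u = v <;> simp [h]
  | inr u =>
    cases j with
    | inl v =>
      simp only [SimpleGraph.adjMatrix_apply, fromBlocks_apply₂₁, corona,
        SimpleGraph.fromRel_adj, Matrix.one_apply]
      by_cases h : v = u
      · simp [h]
      · have h' : ¬ u = v := fun hh => h hh.symm
        simp [h, h']
    | inr v =>
      simp [SimpleGraph.adjMatrix_apply, fromBlocks_apply₂₂, corona,
        SimpleGraph.fromRel_adj]

lemma det_corona (μ : ℝ) (hμ : μ ≠ 0) :
    (μ • 1 - (corona G).adjMatrix ℝ).det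
      = μ ^ Fintype.card V * ((μ - μ⁻¹) • (1 : Matrix V V ℝ) - G.adjMatrix ℝ).det := by
  have h1 : μ • (1 : Matrix (V ⊕ V) (V ⊕ V) ℝ) - (corona G).adjMatrix ℝ
      = fromBlocks (μ • 1 - G.adjMatrix ℝ) (-1) (-1) (μ • 1) := by
    rw [corona_adjMatrix]
    ext i j
    rcases i with u | u <;> rcases j with v | v <;>
      by_cases h : u = v <;>
      simp [Matrix.one_apply, Matrix.sub_apply, Matrix.smul_apply, h]
  have hmul : (μ • (1 : Matrix V V ℝ)) * (μ⁻¹ • 1) = 1 := by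
    rw [Matrix.smul_mul, Matrix.mul_smul, smul_smul, mul_inv_cancel₀ hμ, Matrix.mul_one, one_smul]
  have hmul' : (μ⁻¹ • (1 : Matrix V V ℝ)) * (μ • 1) = 1 := by
    rw [Matrix.smul_mul, Matrix.mul_smul, smul_smul, inv_mul_cancel₀ hμ, Matrix.mul_one, one_smul]
  letI : Invertible (μ • (1 : Matrix V V ℝ)) := ⟨μ⁻¹ • 1, hmul', hmul⟩
  have hinv : ⅟ (μ • (1 : Matrix V V ℝ)) = μ⁻¹ • 1 := invOf_eq_right_inv hmul
  rw [h1, det_fromBlocks₂₂, hinv, det_smul, det_one, mul_one]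
  congr 2
  have h2 : (-1 : Matrix V V ℝ) * (μ⁻¹ • 1) * (-1) = μ⁻¹ • 1 := by
    simp [Matrix.neg_mul, Matrix.mul_neg]
  rw [h2, sub_smul]
  abel

lemma isUnit_corona_adjMatrix : IsUnit ((corona G).adjMatrix ℝ) := by
  have hBC : (fromBlocks (G.adjMatrix ℝ) 1 1 0) * (fromBlocks 0 1 1 (-(G.adjMatrix ℝ)))
      = (1 : Matrix (V ⊕ V) (V ⊕ V) ℝ) := by
    rw [fromBlocks_multiply, ← fromBlocks_one]
    congr 1 <;> simp
  have hCB : (fromBlocks 0 1 1 (-(G.adjMatrix ℝ))) * (fromBlocks (G.adjMatrix ℝ) 1 1 0)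
      = (1 : Matrix (V ⊕ V) (V ⊕ V) ℝ) := by
    rw [fromBlocks_multiply, ← fromBlocks_one]
    congr 1 <;> simp
  rw [corona_adjMatrix]
  exact ⟨⟨_, _, hBC, hCB⟩, rfl⟩

lemma zero_not_mem_spec_corona : (0 : ℝ) ∉ spectrum ℝ ((corona G).adjMatrix ℝ) := by
  rw [spectrum.mem_iff, not_not, map_zero, zero_sub]
  exact (isUnit_corona_adjMatrix G).neg

lemma mem_spec_corona_iff (μ : ℝ) (hμ : μ ≠ 0) :
    μ ∈ spectrum ℝ ((corona G).adjMatrix ℝ)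
      ↔ (μ - μ⁻¹) ∈ spectrum ℝ (G.adjMatrix ℝ) := by
  rw [spectrum.mem_iff, spectrum.mem_iff, Algebra.algebraMap_eq_smul_one,
    Algebra.algebraMap_eq_smul_one, Matrix.isUnit_iff_isUnit_det, Matrix.isUnit_iff_isUnit_det,
    isUnit_iff_ne_zero, isUnit_iff_ne_zero, not_ne_iff, not_ne_iff, det_corona G μ hμ]
  simp [pow_eq_zero_iff, hμ]

end Aux

lemma corona_key {V : Type*} [Fintype V] [DecidableEq V] [Nonempty V]
    (G : SimpleGraph V) [DecidableRel G.Adj] [DecidableRel (corona G).Adj] :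
    sSup (spectrum ℝ ((corona G).adjMatrix ℝ))
      = (sSup (spectrum ℝ (G.adjMatrix ℝ))
          + Real.sqrt ((sSup (spectrum ℝ (G.adjMatrix ℝ))) ^ 2 + 4)) / 2 := by
  set A := G.adjMatrix ℝ with hAdef
  set ρ := sSup (spectrum ℝ A) with hρ
  have finA : (spectrum ℝ A).Finite := A.finite_spectrum
  have hAh : A.IsHermitian := by
    rw [Matrix.IsHermitian, conjTranspose_eq_transpose_of_trivial, hAdef,
      SimpleGraph.transpose_adjMatrix]
  have neA : (spectrum ℝ A).Nonempty :=
    ⟨_, hAh.eigenvalues_mem_spectrum_real (Classical.arbitrary V)⟩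
  have hρmem : ρ ∈ spectrum ℝ A := neA.csSup_mem finA
  set s := Real.sqrt (ρ ^ 2 + 4) with hs
  have hs0 : 0 ≤ s := Real.sqrt_nonneg _
  have hs2 : s ^ 2 = ρ ^ 2 + 4 := Real.sq_sqrt (by positivity)
  have hs2' : 2 ≤ s := by nlinarith
  have hslt : -ρ < s := by nlinarith [sq_nonneg (s + ρ)]
  set t := (ρ + s) / 2 with ht
  have ht0 : 0 < t := by rw [ht]; linarith
  have htt : t ^ 2 = ρ * t + 1 := by rw [ht]; field_simp; nlinarith
  have htρ : t - t⁻¹ = ρ := by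
    field_simp
    nlinarith
  have htmem : t ∈ spectrum ℝ ((corona G).adjMatrix ℝ) := by
    rw [mem_spec_corona_iff G t ht0.ne', htρ]
    exact hρmem
  have ub : ∀ μ ∈ spectrum ℝ ((corona G).adjMatrix ℝ), μ ≤ t := by
    intro μ hmem
    have hμ0 : μ ≠ 0 := by
      rintro rfl
      exact zero_not_mem_spec_corona G hmem
    have hlam : (μ - μ⁻¹) ∈ spectrum ℝ A := (mem_spec_corona_iff G μ hμ0).mp hmem
    have hle : μ - μ⁻¹ ≤ ρ := le_csSup finA.bddAbove hlam
    rcases lt_or_ge 0 μ with hpos | hneg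
    · by_contra hcon
      push_neg at hcon
      have key : μ * μ - (μ - μ⁻¹) * μ = 1 := by field_simp; ring
      have h1 : 0 < μ - t := by linarith
      have h2 : 0 < μ + t - ρ := by rw [ht]; nlinarith
      nlinarith [mul_pos h1 h2]
    · linarith
  have finB : (spectrum ℝ ((corona G).adjMatrix ℝ)).Finite := Matrix.finite_spectrum _
  exact le_antisymm (csSup_le ⟨t, htmem⟩ ub) (le_csSup finB.bddAbove htmem)

lemma specRad_eq {V : Type*} [Fintype V] [DecidableEq V] (G : SimpleGraph V)
    [DecidableRel G.Adj] :
    specRad G = sSup (spectrum ℝ (G.adjMatrix ℝ)) := by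
  unfold specRad
  congr! <;> exact Subsingleton.elim _ _

set_option maxHeartbeats 1000000 in
/-- The spectral radius of the corona `G ∘ K₁` equals `(ρ(G) + √(ρ(G)² + 4))/2`. -/
theorem specRad_corona {V : Type*} [Finite V] [Nonempty V] (G : SimpleGraph V) :
    specRad (corona G) = (specRad G + Real.sqrt ((specRad G) ^ 2 + 4)) / 2 := by
  letI := Fintype.ofFinite V
  letI := Classical.decEq V
  letI := Classical.decRel G.Adj
  letI : DecidableRel (corona G).Adj := Classical.decRel _
  rw [specRad_eq (corona G), specRad_eq G]
  exact corona_key G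
end

section
/- Let T be a tree on n ≥ 5 vertices (n odd) with domination number (n−1)/2, and suppose some vertex u of T is adjacent to at least 3 leaves. Then the domination number of T is strictly less than (n−1)/2, a contradiction; equivalently, in any tree on odd n ≥ 5 vertices with domination number (n−1)/2 in which a vertex u has at least 3 pendant neighbors, one has γ(T) ≤ (n−4)/2 + 1 < (n−1)/2. Hence no vertex of such a tree has 3 or more pendant neighbors. -/
/-- A leaf's only neighbor: if `x` has degree 1 and `u` is adjacent to `x`,
then any neighbor of `x` equals `u`. -/
lemma leaf_unique_nbr {V : Type*} [Fintype V] [DecidableEq V] (T : SimpleGraph V)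
    [DecidableRel T.Adj] {x u p : V} (hdx : T.degree x = 1) (hux : T.Adj u x)
    (hpx : T.Adj x p) : p = u := by
  have h1 : (T.neighborFinset x).card = 1 := hdx
  obtain ⟨a, ha⟩ := Finset.card_eq_one.mp h1
  have hp : p ∈ T.neighborFinset x := by simpa using hpx
  have hu : u ∈ T.neighborFinset x := by simpa using hux.symm
  rw [ha, Finset.mem_singleton] at hp hu
  rw [hp, hu]

/-- In a tree on an odd number `n ≥ 5` of vertices with domination number `(n−1)/2`,
no vertex has 3 or more pendant (leaf) neighbors. -/
theorem no_vertex_with_three_leaf_neighbors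
    {V : Type*} [Fintype V] [DecidableEq V] (T : SimpleGraph V) [DecidableRel T.Adj]
    (hT : T.IsTree) (n : ℕ) (hn : Fintype.card V = n) (hodd : Odd n) (h5 : 5 ≤ n)
    (hdom : domNum T = (n - 1) / 2) :
    ∀ u : V, ((T.neighborFinset u).filter (fun v => T.degree v = 1)).card ≤ 2 := by
  intro u
  by_contra hcard
  replace hcard : 2 < ((T.neighborFinset u).filter (fun v => T.degree v = 1)).card :=
    Nat.lt_of_not_le hcard
  rw [Finset.two_lt_card_iff] at hcard
  obtain ⟨x, y, z, hx, hy, hz, hxy, hxz, hyz⟩ := hcard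
  simp only [Finset.mem_filter, SimpleGraph.mem_neighborFinset] at hx hy hz
  obtain ⟨hux, hdx⟩ := hx
  obtain ⟨huy, hdy⟩ := hy
  obtain ⟨huz, hdz⟩ := hz
  have hxu : x ≠ u := fun h => T.irrefl (h ▸ hux)
  have hyu : y ≠ u := fun h => T.irrefl (h ▸ huy)
  have hzu : z ≠ u := fun h => T.irrefl (h ▸ huz)
  -- every vertex has a neighbor
  have hnbr : ∀ w : V, ∃ p, T.Adj w p := by
    intro w
    have h1 : 1 < Fintype.card V := by omega
    obtain ⟨v, hv⟩ := Fintype.exists_ne_of_one_lt_card h1 w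
    obtain ⟨q⟩ := hT.isConnected.preconnected w v
    have hnil : ¬ q.Nil := SimpleGraph.Walk.not_nil_of_ne (Ne.symm hv)
    exact ⟨q.getVert 1, q.adj_snd hnil⟩
  set S := {k | ∃ D : Set V, IsDomSet T D ∧ D.ncard = k} with hS
  have hSne : S.Nonempty :=
    ⟨(Set.univ : Set V).ncard, Set.univ, fun v hv => absurd (Set.mem_univ v) hv, rfl⟩
  obtain ⟨Dm, hDm, hDmcard⟩ := Nat.sInf_mem hSne
  have hdomS : domNum T = sInf S := rfl
  -- the modified minimum dominating set containing u and avoiding x, y, z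
  set D : Set V := insert u (Dm \ {x, y, z}) with hD
  have huD : u ∈ D := Set.mem_insert _ _
  have hxD : x ∉ D := by
    intro h
    rcases h with h | ⟨_, h⟩
    · exact hxu h
    · exact h (Or.inl rfl)
  have hyD : y ∉ D := by
    intro h
    rcases h with h | ⟨_, h⟩
    · exact hyu h
    · exact h (Or.inr (Or.inl rfl))
  have hzD : z ∉ D := by
    intro h
    rcases h with h | ⟨_, h⟩
    · exact hzu h
    · exact h (Or.inr (Or.inr rfl))
  have hDdom : IsDomSet T D := by
    intro v hv
    by_cases hvxyz : v = x ∨ v = y ∨ v = z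
    · refine ⟨u, huD, ?_⟩
      rcases hvxyz with h | h | h <;> subst h <;> assumption
    · push_neg at hvxyz
      have hvDm : v ∉ Dm := by
        intro h
        exact hv (Set.mem_insert_of_mem _ ⟨h, by
          simp only [Set.mem_insert_iff, Set.mem_singleton_iff]
          push_neg
          exact hvxyz⟩)
      obtain ⟨p, hpDm, hpv⟩ := hDm v hvDm
      by_cases hpxyz : p = x ∨ p = y ∨ p = z
      · exfalso
        have hvu : v = u := by
          rcases hpxyz with h | h | h <;> subst h
          · exact leaf_unique_nbr T hdx hux hpv
          · exact leaf_unique_nbr T hdy huy hpv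
          · exact leaf_unique_nbr T hdz huz hpv
        exact hv (hvu ▸ huD)
      · push_neg at hpxyz
        refine ⟨p, Set.mem_insert_of_mem _ ⟨hpDm, ?_⟩, hpv⟩
        simp only [Set.mem_insert_iff, Set.mem_singleton_iff]
        push_neg
        exact hpxyz
  have hDcard : D.ncard ≤ sInf S := by
    by_cases hu : u ∈ Dm
    · have hsub : D ⊆ Dm := by
        intro w hw
        rcases hw with h | ⟨h, _⟩
        · exact h ▸ hu
        · exact h
      calc D.ncard ≤ Dm.ncard := Set.ncard_le_ncard hsub (Set.toFinite _)
        _ = sInf S := hDmcard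
    · -- then x ∈ Dm
      have hxDm : x ∈ Dm := by
        by_contra hxDm
        obtain ⟨p, hpDm, hpx⟩ := hDm x hxDm
        have : p = u := leaf_unique_nbr T hdx hux hpx.symm
        exact hu (this ▸ hpDm)
      have h1 : D.ncard ≤ (Dm \ {x, y, z}).ncard + 1 := Set.ncard_insert_le _ _
      have h2 : (Dm \ {x, y, z}).ncard ≤ (Dm \ {x}).ncard :=
        Set.ncard_le_ncard (fun w hw => ⟨hw.1, fun h => hw.2 (h ▸ Or.inl rfl)⟩)
          (Set.toFinite _)
      have h3 : (Dm \ {x}).ncard = Dm.ncard - 1 := by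
        rw [Set.ncard_diff_singleton_of_mem hxDm]
      have h4 : 0 < Dm.ncard := (Set.ncard_pos (Set.toFinite _)).mpr ⟨x, hxDm⟩
      omega
  have hDeq : D.ncard = sInf S := le_antisymm hDcard (Nat.sInf_le ⟨D, hDdom, rfl⟩)
  -- minimality: every vertex of D has a neighbor outside D
  have hmin : ∀ w ∈ D, ∃ p, T.Adj w p ∧ p ∉ D := by
    intro w hw
    by_contra hcon
    push_neg at hcon
    have hD' : IsDomSet T (D \ {w}) := by
      intro v hv
      by_cases hvw : v = w
      · subst hvw
        obtain ⟨p, hp⟩ := hnbr v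
        exact ⟨p, ⟨hcon p hp, fun h => T.irrefl ((Set.mem_singleton_iff.mp h) ▸ hp)⟩, hp.symm⟩
      · have hvD : v ∉ D := fun h => hv ⟨h, hvw⟩
        obtain ⟨p, hpD, hpv⟩ := hDdom v hvD
        have hpw : p ≠ w := by
          intro h
          exact hvD (hcon v (h ▸ hpv))
        exact ⟨p, ⟨hpD, hpw⟩, hpv⟩
    have hle : sInf S ≤ (D \ {w}).ncard := Nat.sInf_le ⟨D \ {w}, hD', rfl⟩
    have hc : (D \ {w}).ncard = D.ncard - 1 := Set.ncard_diff_singleton_of_mem hw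
    have h1 : 0 < D.ncard := (Set.ncard_pos (Set.toFinite _)).mpr ⟨w, hw⟩
    omega
  -- the small dominating set
  set A : Set V := insert u (Dᶜ \ {x, y, z}) with hA
  have hAdom : IsDomSet T A := by
    intro v hv
    by_cases hvxyz : v = x ∨ v = y ∨ v = z
    · refine ⟨u, Set.mem_insert _ _, ?_⟩
      rcases hvxyz with h | h | h <;> subst h <;> assumption
    · push_neg at hvxyz
      have hvD : v ∈ D := by
        by_contra h
        exact hv (Set.mem_insert_of_mem _ ⟨h, by
          simp only [Set.mem_insert_iff, Set.mem_singleton_iff]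
          push_neg
          exact hvxyz⟩)
      obtain ⟨p, hpv, hpD⟩ := hmin v hvD
      have hvu : v ≠ u := fun h => hv (h ▸ Set.mem_insert _ _)
      have hpxyz : ¬(p = x ∨ p = y ∨ p = z) := by
        intro h
        apply hvu
        rcases h with h | h | h <;> subst h
        · exact leaf_unique_nbr T hdx hux hpv.symm
        · exact leaf_unique_nbr T hdy huy hpv.symm
        · exact leaf_unique_nbr T hdz huz hpv.symm
      push_neg at hpxyz
      refine ⟨p, Set.mem_insert_of_mem _ ⟨hpD, ?_⟩, hpv.symm⟩
      simp only [Set.mem_insert_iff, Set.mem_singleton_iff]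
      push_neg
      exact hpxyz
  -- counting
  have hsub : ({x, y, z} : Set V) ⊆ Dᶜ := by
    intro w hw
    rcases hw with h | h | h <;> subst h <;> assumption
  have hxyz3 : ({x, y, z} : Set V).ncard = 3 := by
    rw [Set.ncard_insert_of_notMem (by simp [hxy, hxz]) (Set.toFinite _),
      Set.ncard_insert_of_notMem (by simp [hyz]) (Set.toFinite _),
      Set.ncard_singleton]
  have h3le : 3 ≤ (Dᶜ : Set V).ncard := by
    calc (3 : ℕ) = ({x, y, z} : Set V).ncard := hxyz3.symm
      _ ≤ (Dᶜ : Set V).ncard := Set.ncard_le_ncard hsub (Set.toFinite _)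
  have hdiff : (Dᶜ \ {x, y, z}).ncard = (Dᶜ : Set V).ncard - 3 := by
    rw [Set.ncard_diff hsub (Set.toFinite _), hxyz3]
  have hAcard : A.ncard ≤ (Dᶜ : Set V).ncard - 3 + 1 := by
    calc A.ncard ≤ (Dᶜ \ {x, y, z}).ncard + 1 := Set.ncard_insert_le _ _
      _ = (Dᶜ : Set V).ncard - 3 + 1 := by rw [hdiff]
  have hcompl : D.ncard + (Dᶜ : Set V).ncard = n := by
    rw [Set.ncard_add_ncard_compl, Nat.card_eq_fintype_card, hn]
  have hAle : sInf S ≤ A.ncard := Nat.sInf_le ⟨A, hAdom, rfl⟩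
  obtain ⟨m, hm⟩ := hodd
  rw [hdomS] at hdom
  omega
end

section
/- Let n ≥ 5 be odd and let T be a tree on n vertices with domination number (n−1)/2. Let D be a minimum dominating set of T containing all support vertices. Then T contains at most one pendant 3-path w w' w'' (with deg(w)=1, deg(w')=2, deg(w'') ≥ 2) such that w'' is uniquely dominated by w' relative to D. -/
/-- `w w' w''` is a pendant 3-path of `T` such that `w''` is uniquely dominated by `w'`
relative to the dominating set `D`: `deg w = 1`, `deg w' = 2`, `deg w'' ≥ 2`, and `w'` is the
only vertex of `D` dominating `w''`. -/
def Pendant3PathUniqDom {V : Type*} [Fintype V] [DecidableEq V]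
    (T : SimpleGraph V) [DecidableRel T.Adj] (D : Set V) (w w' w'' : V) : Prop :=
  T.Adj w w' ∧ T.Adj w' w'' ∧ T.degree w = 1 ∧ T.degree w' = 2 ∧ 2 ≤ T.degree w'' ∧
    w'' ∉ D ∧ ∀ v ∈ D, T.Adj v w'' → v = w'

section Helpers
open SimpleGraph Finset
set_option linter.unusedSectionVars false
set_option linter.unnecessarySimpa false
set_option maxHeartbeats 1000000

section AuxDist
variable {V : Type*} [DecidableEq V]

lemma dist_lt_of_mem_support {G : SimpleGraph V} {u r v : V}
    (p : G.Walk u r) (hp : p.length = G.dist u r) (hv : v ∈ p.support) (hne : v ≠ u) :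
    G.dist v r < G.dist u r := by
  have h1 : G.dist v r ≤ (p.dropUntil v hv).length := SimpleGraph.dist_le _
  have h2 := congrArg SimpleGraph.Walk.length (p.take_spec hv)
  rw [SimpleGraph.Walk.length_append] at h2
  have h3 : (p.takeUntil v hv).length ≠ 0 := fun h0 =>
    hne (SimpleGraph.Walk.eq_of_length_eq_zero h0).symm
  omega

lemma exists_path_dist {G : SimpleGraph V} {u r : V} (hr : G.Reachable u r) :
    ∃ p : G.Walk u r, p.IsPath ∧ p.length = G.dist u r := by
  obtain ⟨p, hp⟩ := hr.exists_walk_length_eq_dist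
  refine ⟨p.bypass, p.bypass_isPath, le_antisymm (by
    have := p.length_bypass_le; omega) (SimpleGraph.dist_le _)⟩

lemma parent_unique {G : SimpleGraph V} (hac : G.IsAcyclic) {r v u₁ u₂ : V}
    (ha1 : G.Adj v u₁) (hd1 : G.dist u₁ r + 1 = G.dist v r)
    (ha2 : G.Adj v u₂) (hd2 : G.dist u₂ r + 1 = G.dist v r)
    (hreach : ∀ x : V, G.Reachable x r) :
    u₁ = u₂ := by
  obtain ⟨q₁, hq₁p, hq₁l⟩ := exists_path_dist (hreach u₁)
  obtain ⟨q₂, hq₂p, hq₂l⟩ := exists_path_dist (hreach u₂)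
  have hv1 : v ∉ q₁.support := by
    intro hmem
    have := dist_lt_of_mem_support q₁ hq₁l hmem (G.ne_of_adj ha1)
    omega
  have hv2 : v ∉ q₂.support := by
    intro hmem
    have := dist_lt_of_mem_support q₂ hq₂l hmem (G.ne_of_adj ha2)
    omega
  have hp1 : (SimpleGraph.Walk.cons ha1 q₁).IsPath := hq₁p.cons hv1
  have hp2 : (SimpleGraph.Walk.cons ha2 q₂).IsPath := hq₂p.cons hv2
  have heq := hac.path_unique ⟨_, hp1⟩ ⟨_, hp2⟩
  have hw := congrArg Subtype.val heq
  have hsupp := congrArg SimpleGraph.Walk.support hw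
  simp only [SimpleGraph.Walk.support_cons] at hsupp
  rw [q₁.support_eq_cons, q₂.support_eq_cons] at hsupp
  simp only [List.cons.injEq, true_and] at hsupp
  exact hsupp.1

lemma adj_dist_cases {G : SimpleGraph V} (hac : G.IsAcyclic) {r x y : V}
    (hxy : G.Adj x y) (hreach : ∀ z : V, G.Reachable z r) :
    G.dist x r + 1 = G.dist y r ∨ G.dist y r + 1 = G.dist x r := by
  have htri1 : G.dist x r ≤ G.dist y r + 1 := by
    obtain ⟨q, hq⟩ := (hreach y).exists_walk_length_eq_dist
    have := SimpleGraph.dist_le (SimpleGraph.Walk.cons hxy q)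
    simpa [hq] using this
  have htri2 : G.dist y r ≤ G.dist x r + 1 := by
    obtain ⟨q, hq⟩ := (hreach x).exists_walk_length_eq_dist
    have := SimpleGraph.dist_le (SimpleGraph.Walk.cons hxy.symm q)
    simpa [hq] using this
  have hne : G.dist x r ≠ G.dist y r := by
    intro heq
    have hxr : x ≠ r := by
      intro hx
      have h0 : G.dist x r = 0 := by rw [hx, SimpleGraph.dist_self]
      have hyr : y = r := by
        obtain ⟨q, hq⟩ := (hreach y).exists_walk_length_eq_dist
        exact SimpleGraph.Walk.eq_of_length_eq_zero (p := q) (by omega)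
      exact G.ne_of_adj hxy (hx.trans hyr.symm)
    obtain ⟨q, hqp, hql⟩ := exists_path_dist (hreach y)
    have hxs : x ∉ q.support := by
      intro hmem
      have := dist_lt_of_mem_support q hql hmem (G.ne_of_adj hxy)
      omega
    have hp1 : (SimpleGraph.Walk.cons hxy q).IsPath := hqp.cons hxs
    obtain ⟨q', hq'p, hq'l⟩ := exists_path_dist (hreach x)
    have heq2 := hac.path_unique ⟨_, hp1⟩ ⟨_, hq'p⟩
    have hlen := congrArg (fun p => SimpleGraph.Walk.length p.1) heq2
    simp only [SimpleGraph.Walk.length_cons] at hlen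
    omega
  omega

end AuxDist

lemma key_no_two {V : Type*} [Fintype V] [DecidableEq V] (T : SimpleGraph V) [DecidableRel T.Adj]
    (hT : T.IsTree) (n : ℕ) (hn : Fintype.card V = n) (hodd : Odd n) (h5 : 5 ≤ n)
    (hdom : domNum T = (n - 1) / 2)
    (D : Set V) (hD : IsDomSet T D) (hcard : D.ncard = domNum T)
    (hsupp : ∀ u v : V, T.Adj u v → T.degree v = 1 → u ∈ D)
    {w₁ w₁' w₁'' w₂ w₂' w₂'' : V}
    (h1 : Pendant3PathUniqDom T D w₁ w₁' w₁'' )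
    (h2 : Pendant3PathUniqDom T D w₂ w₂' w₂'')
    (hne : w₁' ≠ w₂') : False := by
  classical
  obtain ⟨ha1, hb1, hdg1, hdg1', hdg1'', hnD1, hu1⟩ := h1
  obtain ⟨ha2, hb2, hdg2, hdg2', hdg2'', hnD2, hu2⟩ := h2
  have hDfin : D.Finite := Set.toFinite D
  -- minimality
  have hmin : ∀ D' : Set V, IsDomSet T D' → D.ncard ≤ D'.ncard := by
    intro D' hD'
    rw [hcard, domNum]
    exact Nat.sInf_le ⟨D', hD', rfl⟩
  -- leaves are not in D
  have hleaf : ∀ v : V, T.degree v = 1 → v ∉ D := by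
    intro v hv hvD
    obtain ⟨s, hs⟩ : ∃ s, T.neighborFinset v = {s} := Finset.card_eq_one.mp
      (by rw [T.card_neighborFinset_eq_degree]; exact hv)
    have hvs : T.Adj v s := (T.mem_neighborFinset v s).mp (hs ▸ Finset.mem_singleton_self s)
    have hsD : s ∈ D := hsupp s v hvs.symm hv
    have hdom' : IsDomSet T (D \ {v}) := by
      intro x hx
      by_cases hxv : x = v
      · subst hxv
        exact ⟨s, ⟨hsD, by simp [(T.ne_of_adj hvs).symm]⟩, hvs.symm⟩
      · have hxD : x ∉ D := fun h => hx ⟨h, by simp [hxv]⟩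
        obtain ⟨d, hdD, hdx⟩ := hD x hxD
        have hdv : d ≠ v := by
          rintro rfl
          have : x ∈ T.neighborFinset d := (T.mem_neighborFinset d x).mpr hdx
          rw [hs] at this
          exact hxD (Finset.mem_singleton.mp this ▸ hsD)
        exact ⟨d, ⟨hdD, by simp [hdv]⟩, hdx⟩
    have hle := hmin _ hdom'
    rw [Set.ncard_diff_singleton_of_mem hvD] at hle
    have hpos : 0 < D.ncard := (Set.ncard_pos hDfin).mpr ⟨v, hvD⟩
    omega
  have hs1D : w₁' ∈ D := hsupp w₁' w₁ ha1.symm hdg1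
  have hs2D : w₂' ∈ D := hsupp w₂' w₂ ha2.symm hdg2
  have hw1D : w₁ ∉ D := hleaf w₁ hdg1
  have hw2D : w₂ ∉ D := hleaf w₂ hdg2
  -- unique neighbor of the leaves
  have hN1 : T.neighborFinset w₁ = {w₁'} := by
    obtain ⟨s, hs⟩ : ∃ s, T.neighborFinset w₁ = {s} := Finset.card_eq_one.mp
      (by rw [T.card_neighborFinset_eq_degree]; exact hdg1)
    have : w₁' ∈ T.neighborFinset w₁ := (T.mem_neighborFinset w₁ w₁').mpr ha1
    rw [hs] at this ⊢
    rw [Finset.mem_singleton.mp this]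
  have hN2 : T.neighborFinset w₂ = {w₂'} := by
    obtain ⟨s, hs⟩ : ∃ s, T.neighborFinset w₂ = {s} := Finset.card_eq_one.mp
      (by rw [T.card_neighborFinset_eq_degree]; exact hdg2)
    have : w₂' ∈ T.neighborFinset w₂ := (T.mem_neighborFinset w₂ w₂').mpr ha2
    rw [hs] at this ⊢
    rw [Finset.mem_singleton.mp this]
  -- basic finsets
  set Dom : Finset V := Finset.univ.filter (· ∈ D) with hDomdef
  set Out : Finset V := Finset.univ.filter (fun u => u ∉ D) with hOutdef
  set doms : V → Finset V := fun u => Finset.univ.filter (fun v => v ∈ D ∧ T.Adj v u) with hdomsdef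
  set U : Finset V := Finset.univ.filter (fun u => u ∉ D ∧ (doms u).card = 1) with hUdef
  set M : Finset V := Finset.univ.filter (fun u => u ∉ D ∧ 2 ≤ (doms u).card) with hMdef
  set epn : V → Finset V := fun v => U.filter (fun u => T.Adj v u) with hepndef
  set A : Finset V := Dom.filter (fun v => epn v = ∅) with hAdef
  have hDomcard : Dom.card = D.ncard := by
    rw [Set.ncard_eq_toFinset_card']
    congr 1
    ext x
    simp [hDomdef, Set.mem_toFinset]
  obtain ⟨m, hm⟩ := hodd
  have hDommcard : Dom.card = m := by
    rw [hDomcard, hcard, hdom]; omega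
  have hDomOut : Dom.card + Out.card = n := by
    rw [hDomdef, hOutdef, Finset.card_filter_add_card_filter_not, Finset.card_univ, hn]
  have hOutcard : Out.card = m + 1 := by omega
  -- U and M partition Out
  have hdomsne : ∀ u, u ∉ D → 1 ≤ (doms u).card := by
    intro u hu
    obtain ⟨d, hdD, hdu⟩ := hD u hu
    have : d ∈ doms u := by simp [hdomsdef, hdD, hdu]
    exact Finset.card_pos.mpr ⟨d, this⟩
  have hUM : U.card + M.card = m + 1 := by
    rw [← hOutcard, ← Finset.card_union_of_disjoint (by
      rw [Finset.disjoint_left]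
      intro a haU haM
      simp only [hUdef, hMdef, Finset.mem_filter, Finset.mem_univ, true_and] at haU haM
      omega)]
    congr 1
    ext u
    simp only [hUdef, hMdef, hOutdef, Finset.mem_union, Finset.mem_filter, Finset.mem_univ,
      true_and]
    constructor
    · rintro (⟨h, _⟩ | ⟨h, _⟩) <;> exact h
    · intro h
      have := hdomsne u h
      rcases Nat.lt_or_ge (doms u).card 2 with h2 | h2
      · exact Or.inl ⟨h, by omega⟩
      · exact Or.inr ⟨h, h2⟩
  -- membership of the four private neighbours
  have hdoms1 : doms w₁ = {w₁'} := by
    ext d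
    simp only [hdomsdef, Finset.mem_filter, Finset.mem_univ, true_and, Finset.mem_singleton]
    constructor
    · rintro ⟨hdD, hda⟩
      have : d ∈ T.neighborFinset w₁ := (T.mem_neighborFinset w₁ d).mpr hda.symm
      rw [hN1] at this
      exact Finset.mem_singleton.mp this
    · rintro rfl
      exact ⟨hs1D, ha1.symm⟩
  have hdoms2 : doms w₂ = {w₂'} := by
    ext d
    simp only [hdomsdef, Finset.mem_filter, Finset.mem_univ, true_and, Finset.mem_singleton]
    constructor
    · rintro ⟨hdD, hda⟩
      have : d ∈ T.neighborFinset w₂ := (T.mem_neighborFinset w₂ d).mpr hda.symm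
      rw [hN2] at this
      exact Finset.mem_singleton.mp this
    · rintro rfl
      exact ⟨hs2D, ha2.symm⟩
  have hdoms1'' : doms w₁'' = {w₁'} := by
    ext d
    simp only [hdomsdef, Finset.mem_filter, Finset.mem_univ, true_and, Finset.mem_singleton]
    constructor
    · rintro ⟨hdD, hda⟩
      exact hu1 d hdD hda
    · rintro rfl
      exact ⟨hs1D, hb1⟩
  have hdoms2'' : doms w₂'' = {w₂'} := by
    ext d
    simp only [hdomsdef, Finset.mem_filter, Finset.mem_univ, true_and, Finset.mem_singleton]
    constructor
    · rintro ⟨hdD, hda⟩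
      exact hu2 d hdD hda
    · rintro rfl
      exact ⟨hs2D, hb2⟩
  have hw1U : w₁ ∈ U := by simp [hUdef, hw1D, hdoms1]
  have hw2U : w₂ ∈ U := by simp [hUdef, hw2D, hdoms2]
  have hw1''U : w₁'' ∈ U := by simp [hUdef, hnD1, hdoms1'']
  have hw2''U : w₂'' ∈ U := by simp [hUdef, hnD2, hdoms2'']
  have hw1epn : w₁ ∈ epn w₁' := by simp [hepndef, hw1U, ha1.symm]
  have hw1''epn : w₁'' ∈ epn w₁' := by simp [hepndef, hw1''U, hb1]
  have hw2epn : w₂ ∈ epn w₂' := by simp [hepndef, hw2U, ha2.symm]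
  have hw2''epn : w₂'' ∈ epn w₂' := by simp [hepndef, hw2''U, hb2]
  have hne1 : w₁ ≠ w₁'' := by
    intro h
    rw [← h] at hdg1''
    omega
  have hne2 : w₂ ≠ w₂'' := by
    intro h
    rw [← h] at hdg2''
    omega
  -- epn sets are subsets of U and pairwise disjoint
  have hepnU : ∀ v, epn v ⊆ U := fun v => Finset.filter_subset _ _
  have hepndisj : ∀ v ∈ D, ∀ v' ∈ D, v ≠ v' → Disjoint (epn v) (epn v') := by
    intro v hv v' hv' hvv'
    rw [Finset.disjoint_left]
    intro u hu hu'
    simp only [hepndef, Finset.mem_filter] at hu hu'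
    have huU := hu.1
    simp only [hUdef, Finset.mem_filter, Finset.mem_univ, true_and] at huU
    have hvd : v ∈ doms u := by simp [hdomsdef, hv, hu.2]
    have hv'd : v' ∈ doms u := by simp [hdomsdef, hv', hu'.2]
    have : ({v, v'} : Finset V) ⊆ doms u := by
      intro x hx
      rcases Finset.mem_insert.mp hx with rfl | hx
      · exact hvd
      · exact (Finset.mem_singleton.mp hx) ▸ hv'd
    have h2 : 2 ≤ (doms u).card := by
      calc 2 = ({v, v'} : Finset V).card := (Finset.card_pair hvv').symm
      _ ≤ _ := Finset.card_le_card this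
    omega
  have hw1'A : w₁' ∉ A := by
    simp only [hAdef, Finset.mem_filter, not_and]
    intro _
    exact fun h => by simpa [h] using hw1epn
  have hw2'A : w₂' ∉ A := by
    simp only [hAdef, Finset.mem_filter, not_and]
    intro _
    exact fun h => by simpa [h] using hw2epn
  have hw1'Dom : w₁' ∈ Dom := by simp [hDomdef, hs1D]
  have hw2'Dom : w₂' ∈ Dom := by simp [hDomdef, hs2D]
  have hASub : A ⊆ Dom := Finset.filter_subset _ _
  -- the big sum bound
  have hmemD : ∀ v ∈ Dom \ A, v ∈ D := by
    intro v hv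
    have := (Finset.mem_sdiff.mp hv).1
    simpa [hDomdef] using this
  have hbiU : ((Dom \ A).biUnion epn).card = ∑ v ∈ Dom \ A, (epn v).card :=
    Finset.card_biUnion (fun x hx y hy hxy => hepndisj x (hmemD x hx) y (hmemD y hy) hxy)
  have hbiUsub : (Dom \ A).biUnion epn ⊆ U := by
    intro u hu
    obtain ⟨v, hv, hu⟩ := Finset.mem_biUnion.mp hu
    exact hepnU v hu
  have hsumU : ∑ v ∈ Dom \ A, (epn v).card ≤ U.card := by
    rw [← hbiU]
    exact Finset.card_le_card hbiUsub
  have hlower : ∀ v ∈ Dom \ A, (if v = w₁' ∨ v = w₂' then 2 else 1) ≤ (epn v).card := by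
    intro v hv
    by_cases hcase : v = w₁' ∨ v = w₂'
    · rw [if_pos hcase]
      rcases hcase with rfl | rfl
      · calc 2 = ({w₁, w₁''} : Finset V).card := (Finset.card_pair hne1).symm
        _ ≤ _ := Finset.card_le_card (by
            intro x hx
            rcases Finset.mem_insert.mp hx with rfl | hx
            · exact hw1epn
            · exact (Finset.mem_singleton.mp hx) ▸ hw1''epn)
      · calc 2 = ({w₂, w₂''} : Finset V).card := (Finset.card_pair hne2).symm
        _ ≤ _ := Finset.card_le_card (by
            intro x hx
            rcases Finset.mem_insert.mp hx with rfl | hx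
            · exact hw2epn
            · exact (Finset.mem_singleton.mp hx) ▸ hw2''epn)
    · rw [if_neg hcase]
      have hvA : v ∉ A := (Finset.mem_sdiff.mp hv).2
      have hvDom : v ∈ Dom := (Finset.mem_sdiff.mp hv).1
      have : ¬ (epn v = ∅) := by
        intro h
        exact hvA (by simp [hAdef, hvDom, h])
      exact Finset.card_pos.mpr (Finset.nonempty_iff_ne_empty.mpr this)
  have hsumite : ∑ v ∈ Dom \ A, (if v = w₁' ∨ v = w₂' then 2 else 1) = (Dom \ A).card + 2 := by
    have hfilter : (Dom \ A).filter (fun v => v = w₁' ∨ v = w₂') = {w₁', w₂'} := by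
      ext v
      simp only [Finset.mem_filter, Finset.mem_sdiff, Finset.mem_insert, Finset.mem_singleton]
      constructor
      · rintro ⟨_, h⟩; exact h
      · rintro (rfl | rfl)
        · exact ⟨⟨hw1'Dom, hw1'A⟩, Or.inl rfl⟩
        · exact ⟨⟨hw2'Dom, hw2'A⟩, Or.inr rfl⟩
    have hsplit := Finset.card_filter_add_card_filter_not
      (s := Dom \ A) (p := fun v => v = w₁' ∨ v = w₂')
    rw [hfilter] at hsplit
    have hpair : ({w₁', w₂'} : Finset V).card = 2 := Finset.card_pair hne
    rw [Finset.sum_ite, Finset.sum_const, Finset.sum_const, hfilter, smul_eq_mul, smul_eq_mul,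
      hpair]
    omega
  have hsum2 : (Dom \ A).card + 2 ≤ U.card := by
    rw [← hsumite]
    exact le_trans (Finset.sum_le_sum hlower) hsumU
  have hsdcard : (Dom \ A).card + A.card = Dom.card := by
    rw [Finset.card_sdiff_of_subset hASub]
    have := Finset.card_le_card hASub
    omega
  have hcount1 : M.card + 1 ≤ A.card := by omega
  -- properties of vertices of A
  have hAD : ∀ a ∈ A, a ∈ D := by
    intro a ha
    have := hASub ha
    simpa [hDomdef] using this
  have hAepn : ∀ a ∈ A, epn a = ∅ := fun a ha => (Finset.mem_filter.mp ha).2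
  have hAnbM : ∀ a ∈ A, ∀ u, T.Adj a u → u ∈ M := by
    intro a haA u hau
    have haD : a ∈ D := hAD a haA
    have hepnA : epn a = ∅ := hAepn a haA
    have hnoU : ∀ x, x ∈ U → T.Adj a x → False := by
      intro x hxU hax
      have : x ∈ epn a := by simp [hepndef, hxU, hax]
      simp [hepnA] at this
    have huD : u ∉ D := by
      intro huD
      have hdom' : IsDomSet T (D \ {a}) := by
        intro x hx
        by_cases hxa : x = a
        · subst hxa
          exact ⟨u, ⟨huD, by simp [(T.ne_of_adj hau).symm]⟩, hau.symm⟩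
        · have hxD : x ∉ D := fun h => hx ⟨h, by simp [hxa]⟩
          by_contra hno
          push_neg at hno
          have hallda : ∀ d ∈ D, T.Adj d x → d = a := by
            intro d hdD hdx
            by_contra hda
            exact hno d ⟨hdD, by simp [hda]⟩ hdx
          obtain ⟨d, hdD, hdx⟩ := hD x hxD
          have hda : d = a := hallda d hdD hdx
          subst hda
          have hdomsx : doms x = {d} := by
            ext e
            simp only [hdomsdef, Finset.mem_filter, Finset.mem_univ, true_and,
              Finset.mem_singleton]
            constructor
            · rintro ⟨heD, hex⟩; exact hallda e heD hex
            · rintro rfl; exact ⟨hdD, hdx⟩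
          have hxU : x ∈ U := by simp [hUdef, hxD, hdomsx]
          exact hnoU x hxU hdx
      have hle := hmin _ hdom'
      rw [Set.ncard_diff_singleton_of_mem haD] at hle
      have hpos : 0 < D.ncard := (Set.ncard_pos hDfin).mpr ⟨a, haD⟩
      omega
    have hcard2 : 2 ≤ (doms u).card := by
      have h1 : 1 ≤ (doms u).card := hdomsne u huD
      rcases Nat.lt_or_ge (doms u).card 2 with h2 | h2
      · exfalso
        have hxU : u ∈ U := by
          simp only [hUdef, Finset.mem_filter, Finset.mem_univ, true_and]
          exact ⟨huD, by omega⟩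
        exact hnoU u hxU hau
      · exact h2
    simp [hMdef, huD, hcard2]
  have hVpos : 0 < Fintype.card V := by omega
  have : Nontrivial V := Fintype.one_lt_card_iff_nontrivial.mp (by omega)
  have hAdeg : ∀ a ∈ A, 2 ≤ T.degree a := by
    intro a haA
    have h1 : 0 < T.degree a := by
      rw [T.degree_pos_iff_exists_adj]
      obtain ⟨b, hb⟩ := exists_ne a
      obtain ⟨p⟩ := hT.isConnected.preconnected a b
      cases p with
      | nil => exact absurd rfl hb.symm
      | cons h q => exact ⟨_, h⟩
    have h2 : T.degree a ≠ 1 := fun h => (hleaf a h) (hAD a haA)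
    omega
  have hAnb2 : ∀ a ∈ A, 2 ≤ (M.filter (fun u => T.Adj a u)).card := by
    intro a haA
    calc 2 ≤ T.degree a := hAdeg a haA
    _ = (T.neighborFinset a).card := (T.card_neighborFinset_eq_degree a).symm
    _ ≤ _ := Finset.card_le_card (by
        intro u hu
        have hau : T.Adj a u := (T.mem_neighborFinset a u).mp hu
        exact Finset.mem_filter.mpr ⟨hAnbM a haA u hau, hau⟩)
  -- the A-M edge pairs
  set P : Finset (V × V) := (A ×ˢ M).filter (fun p => T.Adj p.1 p.2) with hPdef
  have hPfst : ∀ p ∈ P, p.1 ∈ A := by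
    intro p hp
    exact (Finset.mem_product.mp (Finset.mem_filter.mp hp).1).1
  have hPsnd : ∀ p ∈ P, p.2 ∈ M := by
    intro p hp
    exact (Finset.mem_product.mp (Finset.mem_filter.mp hp).1).2
  have hPadj : ∀ p ∈ P, T.Adj p.1 p.2 := fun p hp => (Finset.mem_filter.mp hp).2
  have hPcard : 2 * A.card ≤ P.card := by
    have hfib : P.card = ∑ a ∈ A, (P.filter (fun p => p.1 = a)).card :=
      Finset.card_eq_sum_card_fiberwise hPfst
    have hfiblb : ∀ a ∈ A, 2 ≤ (P.filter (fun p => p.1 = a)).card := by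
      intro a haA
      calc 2 ≤ (M.filter (fun u => T.Adj a u)).card := hAnb2 a haA
      _ ≤ _ := Finset.card_le_card_of_injOn (fun m => (a, m)) (by
          intro m hm
          simp only [Finset.mem_coe, Finset.mem_filter] at hm ⊢
          exact ⟨Finset.mem_filter.mpr ⟨Finset.mem_product.mpr ⟨haA, hm.1⟩, hm.2⟩, trivial⟩)
        (by intro x _ y _ hxy; simpa using hxy)
    calc 2 * A.card = ∑ _a ∈ A, 2 := by rw [Finset.sum_const, smul_eq_mul]; ring
    _ ≤ ∑ a ∈ A, (P.filter (fun p => p.1 = a)).card := Finset.sum_le_sum hfiblb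
    _ = P.card := hfib.symm
  -- root and distances
  obtain ⟨r⟩ : Nonempty V := Fintype.card_pos_iff.mp hVpos
  have hreach : ∀ x : V, T.Reachable x r := fun x => hT.isConnected.preconnected x r
  have hAne : A.Nonempty := Finset.card_pos.mp (by omega)
  have hAMne : (A ∪ M).Nonempty := hAne.mono Finset.subset_union_left
  obtain ⟨z, hzmem, hzmin⟩ := Finset.exists_min_image (A ∪ M) (fun v => T.dist v r) hAMne
  set c : V × V → V := fun p => if T.dist p.1 r < T.dist p.2 r then p.2 else p.1 with hcdef
  have hchild : ∀ p ∈ P,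
      (c p = p.2 ∧ T.dist p.1 r + 1 = T.dist p.2 r) ∨
      (c p = p.1 ∧ T.dist p.2 r + 1 = T.dist p.1 r) := by
    intro p hp
    rcases adj_dist_cases hT.2 (hPadj p hp) hreach with h | h
    · left
      exact ⟨by simp [hcdef, if_pos (by omega : T.dist p.1 r < T.dist p.2 r)], h⟩
    · right
      exact ⟨by simp [hcdef, if_neg (by omega : ¬ T.dist p.1 r < T.dist p.2 r)], h⟩
  have hAMdisj : ∀ x, x ∈ A → x ∈ M → False := by
    intro x hxA hxM
    have h1 : x ∈ D := hAD x hxA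
    have h2 : x ∉ D := by
      have := Finset.mem_filter.mp hxM
      simp only [hMdef, Finset.mem_filter, Finset.mem_univ, true_and] at hxM
      exact hxM.1
    exact h2 h1
  have hmapsto : ∀ p ∈ P, c p ∈ (A ∪ M).erase z := by
    intro p hp
    have hpA := hPfst p hp
    have hpM := hPsnd p hp
    rcases hchild p hp with ⟨hc, hd⟩ | ⟨hc, hd⟩
    · rw [hc]
      refine Finset.mem_erase.mpr ⟨?_, Finset.mem_union_right _ hpM⟩
      intro hzeq
      have := hzmin p.1 (Finset.mem_union_left _ hpA)
      rw [← hzeq] at this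
      omega
    · rw [hc]
      refine Finset.mem_erase.mpr ⟨?_, Finset.mem_union_left _ hpA⟩
      intro hzeq
      have := hzmin p.2 (Finset.mem_union_right _ hpM)
      rw [← hzeq] at this
      omega
  have hinj : Set.InjOn c P := by
    intro p hp q hq hpq
    have hp' : p ∈ P := hp
    have hq' : q ∈ P := hq
    rcases hchild p hp' with ⟨hcp, hdp⟩ | ⟨hcp, hdp⟩ <;>
      rcases hchild q hq' with ⟨hcq, hdq⟩ | ⟨hcq, hdq⟩
    · have h2 : p.2 = q.2 := by rw [← hcp, ← hcq, hpq]
      have ha2' : T.Adj p.2 q.1 := by rw [h2]; exact (hPadj q hq').symm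
      have hd2' : T.dist q.1 r + 1 = T.dist p.2 r := by rw [h2]; exact hdq
      have h1 : p.1 = q.1 := parent_unique hT.2 (hPadj p hp').symm hdp ha2' hd2' hreach
      exact Prod.ext h1 h2
    · exfalso
      apply hAMdisj (c p)
      · rw [hpq, hcq]; exact hPfst q hq'
      · rw [hcp]; exact hPsnd p hp'
    · exfalso
      apply hAMdisj (c p)
      · rw [hcp]; exact hPfst p hp'
      · rw [hpq, hcq]; exact hPsnd q hq'
    · have h1 : p.1 = q.1 := by rw [← hcp, ← hcq, hpq]
      have ha2' : T.Adj p.1 q.2 := by rw [h1]; exact hPadj q hq'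
      have hd2' : T.dist q.2 r + 1 = T.dist p.1 r := by rw [h1]; exact hdq
      have h2 : p.2 = q.2 := parent_unique hT.2 (hPadj p hp') hdp ha2' hd2' hreach
      exact Prod.ext h1 h2
  have hPle : P.card ≤ ((A ∪ M).erase z).card := Finset.card_le_card_of_injOn c hmapsto hinj
  have herase : ((A ∪ M).erase z).card = (A ∪ M).card - 1 := Finset.card_erase_of_mem hzmem
  have hAMcard : (A ∪ M).card = A.card + M.card :=
    Finset.card_union_of_disjoint (Finset.disjoint_left.mpr (fun x hx hx' => hAMdisj x hx hx'))
  omega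

end Helpers

/-- Let `n ≥ 5` be odd and `T` a tree on `n` vertices with domination number `(n−1)/2`, and
let `D` be a minimum dominating set containing all support vertices. Then `T` contains at
most one pendant 3-path `w w' w''` such that `w''` is uniquely dominated by `w'`
relative to `D`. -/
theorem at_most_one_pendant3Path_uniqDom
    {V : Type*} [Fintype V] [DecidableEq V] (T : SimpleGraph V) [DecidableRel T.Adj]
    (hT : T.IsTree) (n : ℕ) (hn : Fintype.card V = n) (hodd : Odd n) (h5 : 5 ≤ n)
    (hdom : domNum T = (n - 1) / 2)
    (D : Set V) (hD : IsDomSet T D) (hcard : D.ncard = domNum T)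
    (hsupp : ∀ u v : V, T.Adj u v → T.degree v = 1 → u ∈ D) :
    ∀ w₁ w₁' w₁'' w₂ w₂' w₂'' : V,
      Pendant3PathUniqDom T D w₁ w₁' w₁'' → Pendant3PathUniqDom T D w₂ w₂' w₂'' →
      w₁ = w₂ ∧ w₁' = w₂' ∧ w₁'' = w₂'' := by
  intro w₁ w₁' w₁'' w₂ w₂' w₂'' h1 h2
  have heq' : w₁' = w₂' := by
    by_contra hnep
    exact key_no_two T hT n hn hodd h5 hdom D hD hcard hsupp h1 h2 hnep
  subst heq'
  obtain ⟨ha1, hb1, hdg1, hdg1', hdg1'', hnD1, hu1⟩ := h1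
  obtain ⟨ha2, hb2, hdg2, hdg2', hdg2'', hnD2, hu2⟩ := h2
  have hne1 : w₁ ≠ w₁'' := by
    intro h
    rw [← h] at hdg1''
    omega
  have hNset : T.neighborFinset w₁' = {w₁, w₁''} := by
    symm
    apply Finset.eq_of_subset_of_card_le
    · intro x hx
      rcases Finset.mem_insert.mp hx with rfl | hx
      · exact (T.mem_neighborFinset w₁' x).mpr ha1.symm
      · rw [Finset.mem_singleton.mp hx]
        exact (T.mem_neighborFinset w₁' w₁'').mpr hb1
    · rw [T.card_neighborFinset_eq_degree, hdg1', Finset.card_pair hne1]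
  have hw2mem : w₂ ∈ T.neighborFinset w₁' := (T.mem_neighborFinset w₁' w₂).mpr ha2.symm
  have hw2''mem : w₂'' ∈ T.neighborFinset w₁' := (T.mem_neighborFinset w₁' w₂'').mpr hb2
  rw [hNset] at hw2mem hw2''mem
  have e1 : w₁ = w₂ := by
    rcases Finset.mem_insert.mp hw2mem with h | h
    · exact h.symm
    · exfalso
      rw [Finset.mem_singleton.mp h] at hdg2
      omega
  have e2 : w₁'' = w₂'' := by
    rcases Finset.mem_insert.mp hw2''mem with h | h
    · exfalso
      rw [Finset.mem_insert.mp hw2''mem |> fun _ => h] at hdg2''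
      rw [hdg1] at hdg2''
      omega
    · exact (Finset.mem_singleton.mp h).symm
  exact ⟨e1, rfl, e2⟩
end

section
/- Let T be a tree on an even number m of vertices whose domination number equals m/2, and let D be a minimum dominating set of T. Then the complement V(T)\D is a dominating set of T of the same size m/2; in particular every vertex of D has a neighbor outside D. -/
/-- Let `T` be a tree on an even number `m` of vertices with domination number `m/2` and let
`D` be a minimum dominating set. Then the complement `V(T) \ D` is a dominating set of the
same size `m/2`; in particular every vertex of `D` has a neighbor outside `D`. -/
theorem compl_dominating_and_neighbor_outside
    {V : Type*} [Fintype V] (T : SimpleGraph V) (hT : T.IsTree)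
    (heven : Even (Fintype.card V))
    (hdom : 2 * domNum T = Fintype.card V)
    (D : Set V) (hD : IsDomSet T D) (hcard : D.ncard = domNum T) :
    IsDomSet T Dᶜ ∧ Dᶜ.ncard = Fintype.card V / 2 ∧
      ∀ v ∈ D, ∃ u ∉ D, T.Adj v u := by
  have hconn : T.Connected := hT.isConnected
  have hne : Nonempty V := hconn.nonempty
  have hcardpos : 0 < Fintype.card V := Fintype.card_pos
  have hdpos : 0 < domNum T := by
    rcases Nat.eq_zero_or_pos (domNum T) with h | h
    · omega
    · exact h
  -- every vertex has a neighbor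
  have hnbr : ∀ v : V, ∃ u, T.Adj v u := by
    intro v
    have h2 : 2 ≤ Fintype.card V := by omega
    obtain ⟨u, hu⟩ := Fintype.exists_ne_of_one_lt_card (by omega) v
    obtain ⟨p⟩ := hconn.preconnected v u
    cases p with
    | nil => exact absurd rfl hu.symm
    | cons h q => exact ⟨_, h⟩
  -- main claim
  have key : ∀ v ∈ D, ∃ u ∉ D, T.Adj v u := by
    intro v hv
    by_contra hc
    push_neg at hc
    have hallD : ∀ u, T.Adj v u → u ∈ D := by
      intro u hu
      by_contra hu'
      exact hc u hu' hu
    have hdom' : IsDomSet T (D \ {v}) := by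
      intro w hw
      by_cases hwv : w = v
      · subst hwv
        obtain ⟨u, hu⟩ := hnbr w
        exact ⟨u, ⟨hallD u hu, (T.ne_of_adj hu).symm⟩, hu.symm⟩
      · have hwD : w ∉ D := by
          intro h
          exact hw ⟨h, hwv⟩
        obtain ⟨u, huD, hadj⟩ := hD w hwD
        have huv : u ≠ v := by
          rintro rfl
          exact hwD (hallD w hadj)
        exact ⟨u, ⟨huD, huv⟩, hadj⟩
    have hle : domNum T ≤ (D \ {v}).ncard :=
      Nat.sInf_le ⟨D \ {v}, hdom', rfl⟩
    have hlt : (D \ {v}).ncard = D.ncard - 1 :=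
      Set.ncard_diff_singleton_of_mem hv
    omega
  have hcompl : IsDomSet T Dᶜ := by
    intro v hv
    have hvD : v ∈ D := by simpa using hv
    obtain ⟨u, huD, hadj⟩ := key v hvD
    exact ⟨u, huD, hadj.symm⟩
  refine ⟨hcompl, ?_, key⟩
  have := Set.ncard_add_ncard_compl D
  have hnat : Nat.card V = Fintype.card V := Nat.card_eq_fintype_card
  omega
end

section
/- For odd n ≥ 13, if T is a tree on n vertices with domination number (n−1)/2, exactly one branching vertex (vertex of degree ≥ 3), and maximum degree at most 4, then n ≤ 12 is forced unless γ(T) < (n−1)/2; equivalently, every starlike tree T on n ≥ 13 vertices (n odd) with maximum degree at most 4 has domination number strictly less than (n−1)/2. -/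
set_option linter.unusedSectionVars false
set_option maxHeartbeats 1600000

namespace StarlikeAux

open SimpleGraph Finset

variable {V : Type*} [Fintype V] [DecidableEq V] {T : SimpleGraph V}

/-- `v` has no neighbour farther from the root `r` than itself. -/
def childless (T : SimpleGraph V) (r v : V) : Prop :=
  ∀ w, T.Adj v w → ¬ (T.dist r v + 1 = T.dist r w)

noncomputable instance childless.dec [DecidableRel T.Adj] (r v : V) :
    Decidable (childless T r v) :=
  inferInstanceAs (Decidable (∀ w, T.Adj v w → ¬ (T.dist r v + 1 = T.dist r w)))

/-- `p` has at most one child w.r.t. the root `r`. -/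
def atMostOneChild (T : SimpleGraph V) (r p : V) : Prop :=
  ∀ x y, T.Adj p x → T.Adj p y → T.dist r p + 1 = T.dist r x →
    T.dist r p + 1 = T.dist r y → x = y

/-- In a tree, every path between two vertices has length equal to the distance. -/
lemma tree_path_length (hT : T.IsTree) {a b : V} (p : T.Walk a b) (hp : p.IsPath) :
    p.length = T.dist a b := by
  obtain ⟨q, hq, hql⟩ := hT.isConnected.exists_path_of_dist a b
  have := (hT.existsUnique_path a b).unique hp hq
  rw [this, hql]

/-- Adjacent vertices have distances to `r` differing by exactly one. -/
lemma tree_adj_dist (hT : T.IsTree) (r : V) {x y : V} (hxy : T.Adj x y) :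
    T.dist r x + 1 = T.dist r y ∨ T.dist r y + 1 = T.dist r x := by
  obtain ⟨p, hp, hpl⟩ := hT.isConnected.exists_path_of_dist r x
  by_cases hy : y ∈ p.support
  · right
    have h1 : (p.takeUntil y hy).length = T.dist r y := tree_path_length hT _ (hp.takeUntil hy)
    have h2 := SimpleGraph.Walk.take_spec p hy
    have h3 : (p.dropUntil y hy).length = T.dist y x :=
      tree_path_length hT _ (hp.dropUntil hy)
    have h4 : T.dist y x = 1 := by
      rw [SimpleGraph.dist_eq_one_iff_adj]; exact hxy.symm
    have h5 := congrArg SimpleGraph.Walk.length h2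
    rw [SimpleGraph.Walk.length_append, h1, h3, h4, hpl] at h5
    omega
  · left
    have hcp : (p.concat hxy).IsPath := by
      rw [← SimpleGraph.Walk.isPath_reverse_iff, SimpleGraph.Walk.reverse_concat]
      exact (hp.reverse).cons (by simpa using hy)
    have := tree_path_length hT _ hcp
    rw [SimpleGraph.Walk.length_concat, hpl] at this
    omega

/-- Every non-root vertex has a parent: a neighbour strictly closer to the root. -/
lemma tree_parent_exists (hT : T.IsTree) (r : V) {v : V} (hv : v ≠ r) :
    ∃ p : V, T.Adj p v ∧ T.dist r p + 1 = T.dist r v := by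
  obtain ⟨p, hp, hpl⟩ := hT.isConnected.exists_path_of_dist v r
  cases p with
  | nil => exact absurd rfl hv
  | @cons _ c _ h q =>
    refine ⟨c, h.symm, ?_⟩
    have h1 : T.dist c r ≤ q.length := SimpleGraph.dist_le q
    have h2 : (SimpleGraph.Walk.cons h q).length = q.length + 1 := by simp
    have h3 : T.dist v r = T.dist r v := SimpleGraph.dist_comm
    have h4 : T.dist c r = T.dist r c := SimpleGraph.dist_comm
    rcases tree_adj_dist hT r (h : T.Adj v c) with h5 | h5 <;> omega

/-- Parent uniqueness. -/
lemma tree_parent_unique (hT : T.IsTree) (r : V) {v p q : V} (hp : T.Adj p v) (hq : T.Adj q v)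
    (hdp : T.dist r p + 1 = T.dist r v) (hdq : T.dist r q + 1 = T.dist r v) : p = q := by
  obtain ⟨P, hP, hPl⟩ := hT.isConnected.exists_path_of_dist r p
  obtain ⟨Q, hQ, hQl⟩ := hT.isConnected.exists_path_of_dist r q
  have hvP : v ∉ P.support := by
    intro hv
    have h1 : (P.takeUntil v hv).length = T.dist r v := tree_path_length hT _ (hP.takeUntil hv)
    have := SimpleGraph.Walk.length_takeUntil_le P hv
    omega
  have hvQ : v ∉ Q.support := by
    intro hv
    have h1 : (Q.takeUntil v hv).length = T.dist r v := tree_path_length hT _ (hQ.takeUntil hv)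
    have := SimpleGraph.Walk.length_takeUntil_le Q hv
    omega
  have hPc : (P.concat hp).IsPath := by
    rw [← SimpleGraph.Walk.isPath_reverse_iff, SimpleGraph.Walk.reverse_concat]
    exact (hP.reverse).cons (by simpa using hvP)
  have hQc : (Q.concat hq).IsPath := by
    rw [← SimpleGraph.Walk.isPath_reverse_iff, SimpleGraph.Walk.reverse_concat]
    exact (hQ.reverse).cons (by simpa using hvQ)
  have := (hT.existsUnique_path r v).unique hPc hQc
  obtain ⟨hv, -⟩ := SimpleGraph.Walk.concat_inj this
  exact hv

lemma tree_exists_adj (hT : T.IsTree) (h2 : 2 ≤ Fintype.card V) (v : V) : ∃ w, T.Adj v w := by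
  obtain ⟨w, hw⟩ := Fintype.exists_ne_of_one_lt_card (by omega) v
  obtain ⟨p, hp, -⟩ := tree_parent_exists hT w hw.symm
  exact ⟨p, hp.symm⟩

lemma childless_iff (hT : T.IsTree) [DecidableRel T.Adj] (h2 : 2 ≤ Fintype.card V) (r v : V) :
    childless T r v ↔ (T.degree v = 1 ∧ v ≠ r) := by
  constructor
  · intro h
    have hvr : v ≠ r := by
      rintro rfl
      obtain ⟨w, hw⟩ := tree_exists_adj hT h2 v
      refine h w hw ?_
      rw [SimpleGraph.dist_self, SimpleGraph.dist_eq_one_iff_adj.mpr hw]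
    obtain ⟨p, hp, hd⟩ := tree_parent_exists hT r hvr
    refine ⟨?_, hvr⟩
    have hnb : T.neighborFinset v = {p} := by
      ext w
      simp only [mem_neighborFinset, mem_singleton]
      constructor
      · intro hw
        rcases tree_adj_dist hT r hw with h1 | h1
        · exact absurd h1 (h w hw)
        · exact (tree_parent_unique hT r hp hw.symm hd h1).symm
      · rintro rfl; exact hp.symm
    rw [← SimpleGraph.card_neighborFinset_eq_degree, hnb, Finset.card_singleton]
  · rintro ⟨h1, hvr⟩ w hw hd
    obtain ⟨p, hp, hdp⟩ := tree_parent_exists hT r hvr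
    have hwmem : w ∈ T.neighborFinset v := by rw [mem_neighborFinset]; exact hw
    have hpmem : p ∈ T.neighborFinset v := by rw [mem_neighborFinset]; exact hp.symm
    have hcard : (T.neighborFinset v).card ≤ 1 := by
      rw [SimpleGraph.card_neighborFinset_eq_degree, h1]
    have := Finset.card_le_one.mp hcard w hwmem p hpmem
    subst this
    omega

lemma atMostOneChild_of (hT : T.IsTree) [DecidableRel T.Adj] {r p : V}
    (h : (p ≠ r ∧ T.degree p ≤ 2) ∨ T.degree p ≤ 1) : atMostOneChild T r p := by
  intro x y hx hy hdx hdy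
  by_contra hxy
  have hxmem : x ∈ T.neighborFinset p := by rw [mem_neighborFinset]; exact hx
  have hymem : y ∈ T.neighborFinset p := by rw [mem_neighborFinset]; exact hy
  have hsub2 : ({x, y} : Finset V) ⊆ T.neighborFinset p := by
    intro z hz
    rcases Finset.mem_insert.mp hz with rfl | hz
    · exact hxmem
    · rw [Finset.mem_singleton] at hz; subst hz; exact hymem
  have h2 : 2 ≤ T.degree p := by
    rw [← SimpleGraph.card_neighborFinset_eq_degree]
    calc 2 = ({x, y} : Finset V).card := (Finset.card_pair hxy).symm
    _ ≤ _ := Finset.card_le_card hsub2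
  rcases h with ⟨hpr, hd2⟩ | hd1
  · obtain ⟨q, hq, hdq⟩ := tree_parent_exists hT r hpr
    have hqx : q ≠ x := by intro h'; subst h'; omega
    have hqy : q ≠ y := by intro h'; subst h'; omega
    have hsub : ({q, x, y} : Finset V) ⊆ T.neighborFinset p := by
      intro z hz
      rcases Finset.mem_insert.mp hz with rfl | hz
      · rw [mem_neighborFinset]; exact hq.symm
      · exact hsub2 hz
    have hc : ({q, x, y} : Finset V).card = 3 := by
      rw [Finset.card_insert_of_notMem (by simp [hqx, hqy]), Finset.card_pair hxy]
    have := Finset.card_le_card hsub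
    rw [hc, SimpleGraph.card_neighborFinset_eq_degree] at this
    omega
  · omega

lemma class_card (hT : T.IsTree) [DecidableRel T.Adj] (r : V) (j : ℕ) (hj : j < 3)
    (i : ℕ) (hi : (j + 1) % 3 = i)
    (Hone : ∀ p : V, T.dist r p % 3 = j → atMostOneChild T r p) :
    (univ.filter (fun v => v ≠ r ∧ T.dist r v % 3 = i)).card
      + (univ.filter (fun v => childless T r v ∧ T.dist r v % 3 = j)).card
      = (univ.filter (fun v => T.dist r v % 3 = j)).card := by
  classical
  subst hi
  have key : (univ.filter (fun v => v ≠ r ∧ T.dist r v % 3 = (j + 1) % 3)).card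
      = (univ.filter (fun p => ¬ childless T r p ∧ T.dist r p % 3 = j)).card := by
    apply Finset.card_bij
      (i := fun v hv => Classical.choose
        (tree_parent_exists hT r (Finset.mem_filter.mp hv).2.1))
    · intro v hv
      obtain ⟨-, hvr, hvc⟩ := Finset.mem_filter.mp hv
      obtain ⟨hadj, hdist⟩ := Classical.choose_spec (tree_parent_exists hT r hvr)
      rw [Finset.mem_filter]
      refine ⟨Finset.mem_univ _, fun hcl => hcl v hadj hdist, by omega⟩
    · intro v1 hv1 v2 hv2 heq
      obtain ⟨-, hvr1, hvc1⟩ := Finset.mem_filter.mp hv1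
      obtain ⟨-, hvr2, hvc2⟩ := Finset.mem_filter.mp hv2
      obtain ⟨hadj1, hdist1⟩ := Classical.choose_spec (tree_parent_exists hT r hvr1)
      obtain ⟨hadj2, hdist2⟩ := Classical.choose_spec (tree_parent_exists hT r hvr2)
      set p := Classical.choose (tree_parent_exists hT r hvr1) with hp
      rw [← heq] at hadj2 hdist2
      have hpj : T.dist r p % 3 = j := by omega
      exact Hone p hpj v1 v2 hadj1 hadj2 hdist1 hdist2
    · intro p hp
      obtain ⟨-, hncl, hpj⟩ := Finset.mem_filter.mp hp
      simp only [childless, not_forall] at hncl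
      obtain ⟨w, hadj, hdist⟩ := hncl
      rw [not_not] at hdist
      have hwr : w ≠ r := by
        intro h'; subst h'
        rw [SimpleGraph.dist_self] at hdist
        omega
      have hwmem : w ∈ univ.filter (fun v => v ≠ r ∧ T.dist r v % 3 = (j + 1) % 3) := by
        rw [Finset.mem_filter]
        exact ⟨Finset.mem_univ _, hwr, by omega⟩
      refine ⟨w, hwmem, ?_⟩
      obtain ⟨hadj', hdist'⟩ := Classical.choose_spec (tree_parent_exists hT r hwr)
      exact tree_parent_unique hT r hadj' hadj hdist' (by omega)
  rw [key]
  have := Finset.card_filter_add_card_filter_not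
    (s := univ.filter (fun v => T.dist r v % 3 = j)) (p := fun v => childless T r v)
  rw [Finset.filter_filter, Finset.filter_filter] at this
  have e1 : (univ.filter fun a => T.dist r a % 3 = j ∧ childless T r a)
      = (univ.filter fun v => childless T r v ∧ T.dist r v % 3 = j) := by
    apply Finset.filter_congr; intro x _; exact and_comm
  have e2 : (univ.filter fun a => T.dist r a % 3 = j ∧ ¬ childless T r a)
      = (univ.filter fun v => ¬ childless T r v ∧ T.dist r v % 3 = j) := by
    apply Finset.filter_congr; intro x _; exact and_comm
  rw [e1, e2] at this
  omega

/-- Along a `u`-avoiding path whose first step goes towards the root, every step goes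
towards the root. -/
lemma tree_down (hT : T.IsTree) (r u : V)
    (Hone : ∀ p : V, p ≠ u → atMostOneChild T r p) {c b : V} (W : T.Walk c b) :
    ∀ (a : V) (h : T.Adj a c), (SimpleGraph.Walk.cons h W).IsPath →
      (∀ x ∈ (SimpleGraph.Walk.cons h W).support, x ≠ u) → T.dist r c + 1 = T.dist r a →
      T.dist r a = T.dist r b + W.length + 1 := by
  induction W with
  | nil => intro a h hp hu hd; simpa using hd.symm
  | @cons c y b h' W2 ih =>
    intro a h hp hu hd
    have hcu : c ≠ u := hu c (by simp)
    have hdy : T.dist r y + 1 = T.dist r c := by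
      rcases tree_adj_dist hT r h' with h1 | h1
      · exfalso
        have hya : y = a := Hone c hcu y a h' h.symm h1 (by omega)
        rw [SimpleGraph.Walk.cons_isPath_iff] at hp
        exact hp.2 (hya ▸ (by simp : y ∈ (SimpleGraph.Walk.cons h' W2).support))
      · exact h1
    have := ih c h' (SimpleGraph.Walk.IsPath.of_cons hp)
      (fun x hx => hu x (by
        simp only [SimpleGraph.Walk.support_cons, List.mem_cons] at hx ⊢; tauto)) hdy
    simp only [SimpleGraph.Walk.length_cons] at *
    omega

/-- A `u`-avoiding path starting at a childless vertex descends all the way. -/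
lemma tree_desc (hT : T.IsTree) (u : V)
    (Hone : ∀ p : V, p ≠ u → atMostOneChild T u p) {x y : V} (R : T.Walk x y)
    (hR : R.IsPath) (hufree : ∀ z ∈ R.support, z ≠ u) (hx : childless T u x)
    (hlen : R.length ≠ 0) : T.dist u x = T.dist u y + R.length := by
  cases R with
  | nil => simp at hlen
  | @cons _ c _ h W =>
    have hd : T.dist u c + 1 = T.dist u x := by
      rcases tree_adj_dist hT u h with h1 | h1
      · exact absurd h1 (hx c h)
      · exact h1
    have := tree_down hT u u Hone W x h hR hufree hd
    simp only [SimpleGraph.Walk.length_cons]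
    omega

/-- The distance between two distinct leaves passes through the centre. -/
lemma tree_leaf_dist (hT : T.IsTree) (u : V)
    (Hone : ∀ p : V, p ≠ u → atMostOneChild T u p) {w0 v : V}
    (hw0 : childless T u w0) (hv : childless T u v) (hne : w0 ≠ v) :
    T.dist w0 v = T.dist u w0 + T.dist u v := by
  obtain ⟨P, hP, hPl⟩ := hT.isConnected.exists_path_of_dist w0 v
  by_cases hu : u ∈ P.support
  · have h1 : (P.takeUntil u hu).length = T.dist w0 u := tree_path_length hT _ (hP.takeUntil hu)
    have h2 : (P.dropUntil u hu).length = T.dist u v := tree_path_length hT _ (hP.dropUntil hu)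
    have h3 := congrArg SimpleGraph.Walk.length (SimpleGraph.Walk.take_spec P hu)
    rw [SimpleGraph.Walk.length_append, h1, h2, hPl] at h3
    rw [← h3, SimpleGraph.dist_comm (u := w0)]
  · exfalso
    have hune : ∀ x ∈ P.support, x ≠ u := fun x hx hxu => hu (hxu ▸ hx)
    have hlen : P.length ≠ 0 := by
      rw [hPl]
      have := hT.isConnected.pos_dist_of_ne hne
      omega
    have l1 := tree_desc hT u Hone P hP hune hw0 hlen
    have l2 := tree_desc hT u Hone P.reverse (hP.reverse)
      (by intro z hz
          exact hune z (by rwa [SimpleGraph.Walk.support_reverse, List.mem_reverse] at hz)) hv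
      (by rwa [SimpleGraph.Walk.length_reverse])
    rw [SimpleGraph.Walk.length_reverse] at l2
    omega

lemma domNum_le_of [DecidableRel T.Adj] (D : Set V) (h : IsDomSet T D) : domNum T ≤ D.ncard :=
  Nat.sInf_le ⟨D, h, rfl⟩

lemma dom0 (hT : T.IsTree) [DecidableRel T.Adj] (r : V) :
    IsDomSet T ↑(univ.filter
      (fun v => T.dist r v % 3 = 0 ∨ (childless T r v ∧ T.dist r v % 3 = 2))) := by
  intro v hv
  rw [Finset.mem_coe, Finset.mem_filter] at hv
  have hv' : ¬ (T.dist r v % 3 = 0 ∨ (childless T r v ∧ T.dist r v % 3 = 2)) :=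
    fun h => hv ⟨Finset.mem_univ _, h⟩
  have hvr : v ≠ r := by
    rintro rfl
    exact hv' (Or.inl (by rw [SimpleGraph.dist_self]))
  have hnot0 : T.dist r v % 3 ≠ 0 := fun h => hv' (Or.inl h)
  have h12 : T.dist r v % 3 = 1 ∨ T.dist r v % 3 = 2 := by omega
  rcases h12 with h1 | h1
  · obtain ⟨p, hp, hd⟩ := tree_parent_exists hT r hvr
    refine ⟨p, ?_, hp⟩
    rw [Finset.mem_coe, Finset.mem_filter]
    exact ⟨Finset.mem_univ _, Or.inl (by omega)⟩
  · have hncl : ¬ childless T r v := fun hc => hv' (Or.inr ⟨hc, h1⟩)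
    simp only [childless, not_forall, not_not] at hncl
    obtain ⟨w, hadj, hd⟩ := hncl
    refine ⟨w, ?_, hadj.symm⟩
    rw [Finset.mem_coe, Finset.mem_filter]
    exact ⟨Finset.mem_univ _, Or.inl (by omega)⟩

lemma dom1 (hT : T.IsTree) [DecidableRel T.Adj] (h2 : 2 ≤ Fintype.card V) (r : V) :
    IsDomSet T ↑(univ.filter
      (fun v => T.dist r v % 3 = 1 ∨ (childless T r v ∧ T.dist r v % 3 = 0))) := by
  intro v hv
  rw [Finset.mem_coe, Finset.mem_filter] at hv
  have hv' : ¬ (T.dist r v % 3 = 1 ∨ (childless T r v ∧ T.dist r v % 3 = 0)) :=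
    fun h => hv ⟨Finset.mem_univ _, h⟩
  by_cases hvr : v = r
  · subst hvr
    obtain ⟨w, hw⟩ := tree_exists_adj hT h2 v
    refine ⟨w, ?_, hw.symm⟩
    rw [Finset.mem_coe, Finset.mem_filter]
    refine ⟨Finset.mem_univ _, Or.inl ?_⟩
    rw [SimpleGraph.dist_eq_one_iff_adj.mpr hw]
  · have hnot1 : T.dist r v % 3 ≠ 1 := fun h => hv' (Or.inl h)
    have h02 : T.dist r v % 3 = 0 ∨ T.dist r v % 3 = 2 := by omega
    rcases h02 with h1 | h1
    · have hncl : ¬ childless T r v := fun hc => hv' (Or.inr ⟨hc, h1⟩)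
      simp only [childless, not_forall, not_not] at hncl
      obtain ⟨w, hadj, hd⟩ := hncl
      refine ⟨w, ?_, hadj.symm⟩
      rw [Finset.mem_coe, Finset.mem_filter]
      exact ⟨Finset.mem_univ _, Or.inl (by omega)⟩
    · obtain ⟨p, hp, hd⟩ := tree_parent_exists hT r hvr
      refine ⟨p, ?_, hp⟩
      rw [Finset.mem_coe, Finset.mem_filter]
      exact ⟨Finset.mem_univ _, Or.inl (by omega)⟩

lemma three_class_sum (f : V → ℕ) :
    (univ.filter (fun v => f v % 3 = 0)).card + (univ.filter (fun v => f v % 3 = 1)).card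
      + (univ.filter (fun v => f v % 3 = 2)).card = Fintype.card V := by
  have h01 := Finset.card_filter_add_card_filter_not
    (s := univ) (p := fun v : V => f v % 3 = 0)
  have h2 := Finset.card_filter_add_card_filter_not
    (s := univ.filter (fun v : V => ¬ f v % 3 = 0)) (p := fun v : V => f v % 3 = 1)
  rw [Finset.filter_filter, Finset.filter_filter] at h2
  have e1 : (univ.filter fun a : V => ¬ f a % 3 = 0 ∧ f a % 3 = 1)
      = univ.filter fun v : V => f v % 3 = 1 := by
    ext x; simp only [Finset.mem_filter, Finset.mem_univ, true_and]; omega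
  have e2 : (univ.filter fun a : V => ¬ f a % 3 = 0 ∧ ¬ f a % 3 = 1)
      = univ.filter fun v : V => f v % 3 = 2 := by
    ext x; simp only [Finset.mem_filter, Finset.mem_univ, true_and]; omega
  rw [e1, e2] at h2
  rw [← Finset.card_univ]
  omega

lemma leaf_count (hT : T.IsTree) [DecidableRel T.Adj] (u : V) (hu3 : 3 ≤ T.degree u)
    (hdeg : ∀ v, v ≠ u → T.degree v ≤ 2) (hdeg1 : ∀ v, 1 ≤ T.degree v) :
    (univ.filter (fun v => T.degree v = 1)).card = T.degree u := by
  have hedge := hT.card_edgeFinset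
  have hsum := T.sum_degrees_eq_twice_card_edges
  set s : Finset V := univ.erase u with hs
  have key1 : ∑ v ∈ s, T.degree v + T.degree u = ∑ v ∈ univ, T.degree v :=
    Finset.sum_erase_add _ _ (Finset.mem_univ u)
  have key2 : (s.filter (fun v => T.degree v = 1)).card + ∑ v ∈ s, T.degree v
      = 2 * s.card := by
    have hc : (s.filter (fun v => T.degree v = 1)).card
        = ∑ v ∈ s, (2 - T.degree v) := by
      rw [Finset.card_filter]
      apply Finset.sum_congr rfl
      intro v hv
      have hv' : v ≠ u := Finset.ne_of_mem_erase hv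
      have := hdeg v hv'
      have := hdeg1 v
      rcases Nat.lt_or_ge (T.degree v) 2 with h | h
      · have : T.degree v = 1 := by omega
        simp [this]
      · have : T.degree v = 2 := by omega
        simp [this]
    rw [hc, ← Finset.sum_add_distrib]
    have : ∀ v ∈ s, 2 - T.degree v + T.degree v = 2 := by
      intro v hv
      have := hdeg v (Finset.ne_of_mem_erase hv)
      omega
    rw [Finset.sum_congr rfl this, Finset.sum_const, smul_eq_mul, Nat.mul_comm]
  have key3 : (univ.filter (fun v => T.degree v = 1)).card
      = (s.filter (fun v => T.degree v = 1)).card := by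
    congr 1
    ext v
    have hne : T.degree v = 1 → v ≠ u := fun h hvu => by rw [hvu] at h; omega
    simp only [Finset.mem_filter, Finset.mem_univ, true_and, hs, Finset.mem_erase]
    constructor
    · intro h
      have := hne h
      tauto
    · tauto
  have hcard : s.card + 1 = Fintype.card V := by
    rw [hs, Finset.card_erase_of_mem (Finset.mem_univ u), Finset.card_univ]
    have : 1 ≤ Fintype.card V := Fintype.card_pos_iff.mpr ⟨u⟩
    omega
  omega

end StarlikeAux

open StarlikeAux SimpleGraph Finset in
/-- Every starlike tree (a tree with exactly one branching vertex, i.e. exactly one vertex of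
degree at least 3) on an odd number `n ≥ 13` of vertices with maximum degree at most 4 has
domination number strictly less than `(n − 1)/2`. -/
theorem starlike_tree_domNum_lt
    {V : Type*} [Fintype V] [DecidableEq V] (T : SimpleGraph V) [DecidableRel T.Adj]
    (hT : T.IsTree) (n : ℕ) (hn : Fintype.card V = n) (hodd : Odd n) (h13 : 13 ≤ n)
    (hstar : ∃! u : V, 3 ≤ T.degree u)
    (hmax : T.maxDegree ≤ 4) :
    domNum T < (n - 1) / 2 := by
  obtain ⟨u, hu3, huniq⟩ := hstar
  have hodd' : n % 2 = 1 := Nat.odd_iff.mp hodd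
  have h2 : 2 ≤ Fintype.card V := by omega
  have hdeg2 : ∀ v, v ≠ u → T.degree v ≤ 2 := by
    intro v hv
    by_contra h
    exact hv (huniq v (by omega))
  have hdeg1 : ∀ v, 1 ≤ T.degree v := by
    intro v
    obtain ⟨w, hw⟩ := tree_exists_adj hT h2 v
    have : 0 < T.degree v := (SimpleGraph.degree_pos_iff_exists_adj (G := T) (v := v)).mpr ⟨w, hw⟩
    omega
  have hk4 : T.degree u ≤ 4 := le_trans (T.degree_le_maxDegree u) hmax
  have hneu : ∀ v, T.degree v = 1 → v ≠ u := fun v h hvu => by rw [hvu] at h; omega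
  have hdu0 : ∀ v : V, T.dist u v = 0 → v = u := fun v h =>
    ((hT.isConnected.dist_eq_zero_iff).mp h).symm
  have honeNe : ∀ p, p ≠ u → atMostOneChild T u p := fun p hp =>
    atMostOneChild_of hT (Or.inl ⟨hp, hdeg2 p hp⟩)
  have hone2 : ∀ p, T.dist u p % 3 = 2 → atMostOneChild T u p := by
    intro p hp
    refine honeNe p (fun h => ?_)
    subst h
    rw [SimpleGraph.dist_self] at hp
    omega
  have hone1 : ∀ p, T.dist u p % 3 = 1 → atMostOneChild T u p := by
    intro p hp
    refine honeNe p (fun h => ?_)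
    subst h
    rw [SimpleGraph.dist_self] at hp
    omega
  -- root-`u` residue classes
  have eq1 := class_card hT u 2 (by norm_num) 0 (by norm_num) hone2
  have eq2 := class_card hT u 1 (by norm_num) 2 (by norm_num) hone1
  have e_erase : (univ.filter (fun v => v ≠ u ∧ T.dist u v % 3 = 0))
      = (univ.filter (fun v : V => T.dist u v % 3 = 0)).erase u := by
    ext v
    simp only [Finset.mem_filter, Finset.mem_univ, true_and, Finset.mem_erase]
    try tauto
  have hu0 : u ∈ univ.filter (fun v : V => T.dist u v % 3 = 0) := by
    simp [SimpleGraph.dist_self]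
  have e0card := Finset.card_erase_add_one hu0
  rw [e_erase] at eq1
  have e_eq : (univ.filter (fun v => v ≠ u ∧ T.dist u v % 3 = 2))
      = (univ.filter (fun v : V => T.dist u v % 3 = 2)) := by
    ext v
    simp only [Finset.mem_filter, Finset.mem_univ, true_and]
    constructor
    · tauto
    · intro h
      refine ⟨fun hvu => ?_, h⟩
      subst hvu
      rw [SimpleGraph.dist_self] at h
      omega
  rw [e_eq] at eq2
  have hpart := three_class_sum (fun v : V => T.dist u v)
  -- leaves
  have hLf : (univ.filter (fun v : V => T.degree v = 1)).card = T.degree u :=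
    leaf_count hT u hu3 hdeg2 hdeg1
  have hS2 : (univ.filter (fun v => childless T u v ∧ T.dist u v % 3 = 2))
      = (univ.filter (fun v : V => T.degree v = 1 ∧ T.dist u v % 3 = 2)) := by
    ext v
    simp only [Finset.mem_filter, Finset.mem_univ, true_and]
    rw [childless_iff hT h2 u v]
    constructor
    · tauto
    · intro ⟨h1, h3⟩; exact ⟨⟨h1, hneu v h1⟩, h3⟩
  have hS1 : (univ.filter (fun v => childless T u v ∧ T.dist u v % 3 = 1))
      = (univ.filter (fun v : V => T.degree v = 1 ∧ T.dist u v % 3 = 1)) := by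
    ext v
    simp only [Finset.mem_filter, Finset.mem_univ, true_and]
    rw [childless_iff hT h2 u v]
    constructor
    · tauto
    · intro ⟨h1, h3⟩; exact ⟨⟨h1, hneu v h1⟩, h3⟩
  rw [hS2] at eq1
  rw [hS1] at eq2
  have hdisjL : Disjoint (univ.filter (fun v : V => T.degree v = 1 ∧ T.dist u v % 3 = 1))
      (univ.filter (fun v : V => T.degree v = 1 ∧ T.dist u v % 3 = 2)) := by
    rw [Finset.disjoint_left]
    intro a ha hb
    rw [Finset.mem_filter] at ha hb
    omega
  have hsubL : (univ.filter (fun v : V => T.degree v = 1 ∧ T.dist u v % 3 = 1))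
      ∪ (univ.filter (fun v : V => T.degree v = 1 ∧ T.dist u v % 3 = 2))
      ⊆ univ.filter (fun v : V => T.degree v = 1) := by
    intro a ha
    rw [Finset.mem_union] at ha
    rw [Finset.mem_filter]
    rcases ha with ha | ha
    · rw [Finset.mem_filter] at ha
      exact ⟨ha.1, ha.2.1⟩
    · rw [Finset.mem_filter] at ha
      exact ⟨ha.1, ha.2.1⟩
  have hst : (univ.filter (fun v : V => T.degree v = 1 ∧ T.dist u v % 3 = 1)).card
      + (univ.filter (fun v : V => T.degree v = 1 ∧ T.dist u v % 3 = 2)).card ≤ 4 := by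
    have h1 := Finset.card_le_card hsubL
    rw [Finset.card_union_of_disjoint hdisjL] at h1
    omega
  -- the dominating set rooted at `u`
  have hD2dom := dom0 hT u
  have hD2le : domNum T ≤ (univ.filter
      (fun v => T.dist u v % 3 = 0 ∨ (childless T u v ∧ T.dist u v % 3 = 2))).card := by
    have := domNum_le_of _ hD2dom
    rwa [Set.ncard_coe_finset] at this
  have hD2card : (univ.filter
      (fun v => T.dist u v % 3 = 0 ∨ (childless T u v ∧ T.dist u v % 3 = 2))).card
      = (univ.filter (fun v : V => T.dist u v % 3 = 0)).card
        + (univ.filter (fun v : V => T.degree v = 1 ∧ T.dist u v % 3 = 2)).card := by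
    rw [Finset.filter_or, Finset.card_union_of_disjoint, hS2]
    rw [Finset.disjoint_left]
    intro a ha hb
    rw [Finset.mem_filter] at ha hb
    have := hb.2.2
    omega
  by_cases hs0 : (univ.filter (fun v : V => T.degree v = 1 ∧ T.dist u v % 3 = 2)).card = 0
  · omega
  · -- there is a leaf at depth ≡ 2 (mod 3); re-root there
    have hne : (univ.filter (fun v : V => T.degree v = 1 ∧ T.dist u v % 3 = 2)).Nonempty :=
      Finset.card_pos.mp (by omega)
    obtain ⟨w0, hw0mem⟩ := hne
    rw [Finset.mem_filter] at hw0mem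
    obtain ⟨-, hw0deg, hw0d⟩ := hw0mem
    have hw0u : w0 ≠ u := hneu w0 hw0deg
    have hw0cl : childless T u w0 := (childless_iff hT h2 u w0).mpr ⟨hw0deg, hw0u⟩
    have hbu : T.dist w0 u % 3 = 2 := by
      rw [SimpleGraph.dist_comm]; exact hw0d
    have honeb : ∀ p, T.dist w0 p % 3 ≠ 2 → atMostOneChild T w0 p := by
      intro p hp
      by_cases hpw : p = w0
      · subst hpw
        exact atMostOneChild_of hT (Or.inr (le_of_eq hw0deg))
      · have hpu : p ≠ u := fun h => hp (h ▸ hbu)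
        exact atMostOneChild_of hT (Or.inl ⟨hpw, hdeg2 p hpu⟩)
    have eqb1 := class_card hT w0 0 (by norm_num) 1 (by norm_num)
      (fun p hp => honeb p (by omega))
    have eqb2 := class_card hT w0 1 (by norm_num) 2 (by norm_num)
      (fun p hp => honeb p (by omega))
    have e_b1 : (univ.filter (fun v => v ≠ w0 ∧ T.dist w0 v % 3 = 1))
        = (univ.filter (fun v : V => T.dist w0 v % 3 = 1)) := by
      ext v
      simp only [Finset.mem_filter, Finset.mem_univ, true_and]
      constructor
      · tauto
      · intro h
        refine ⟨fun hvw => ?_, h⟩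
        subst hvw
        rw [SimpleGraph.dist_self] at h
        omega
    have e_b2 : (univ.filter (fun v => v ≠ w0 ∧ T.dist w0 v % 3 = 2))
        = (univ.filter (fun v : V => T.dist w0 v % 3 = 2)) := by
      ext v
      simp only [Finset.mem_filter, Finset.mem_univ, true_and]
      constructor
      · tauto
      · intro h
        refine ⟨fun hvw => ?_, h⟩
        subst hvw
        rw [SimpleGraph.dist_self] at h
        omega
    rw [e_b1] at eqb1
    rw [e_b2] at eqb2
    have hpartb := three_class_sum (fun v : V => T.dist w0 v)
    have hldist : ∀ v, T.degree v = 1 → v ≠ w0 →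
        T.dist w0 v = T.dist u w0 + T.dist u v := by
      intro v hv hvw
      exact tree_leaf_dist hT u honeNe hw0cl
        ((childless_iff hT h2 u v).mpr ⟨hv, hneu v hv⟩) (Ne.symm hvw)
    have hM0 : (univ.filter (fun v => childless T w0 v ∧ T.dist w0 v % 3 = 0))
        = (univ.filter (fun v : V => T.degree v = 1 ∧ T.dist u v % 3 = 1)) := by
      ext v
      simp only [Finset.mem_filter, Finset.mem_univ, true_and]
      constructor
      · rintro ⟨hcl, hb⟩
        obtain ⟨hdv, hvw⟩ := (childless_iff hT h2 w0 v).mp hcl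
        have := hldist v hdv hvw
        exact ⟨hdv, by omega⟩
      · rintro ⟨hdv, hd1⟩
        have hvw : v ≠ w0 := by
          intro h
          subst h
          omega
        have := hldist v hdv hvw
        exact ⟨(childless_iff hT h2 w0 v).mpr ⟨hdv, hvw⟩, by omega⟩
    have hM1 : (univ.filter (fun v => childless T w0 v ∧ T.dist w0 v % 3 = 1))
        = (univ.filter (fun v : V => T.degree v = 1 ∧ T.dist u v % 3 = 2)).erase w0 := by
      ext v
      simp only [Finset.mem_filter, Finset.mem_univ, true_and, Finset.mem_erase]
      constructor
      · rintro ⟨hcl, hb⟩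
        obtain ⟨hdv, hvw⟩ := (childless_iff hT h2 w0 v).mp hcl
        have := hldist v hdv hvw
        exact ⟨hvw, hdv, by omega⟩
      · rintro ⟨hvw, hdv, hd2⟩
        have := hldist v hdv hvw
        exact ⟨(childless_iff hT h2 w0 v).mpr ⟨hdv, hvw⟩, by omega⟩
    have hw0SL2 : w0 ∈ univ.filter (fun v : V => T.degree v = 1 ∧ T.dist u v % 3 = 2) := by
      rw [Finset.mem_filter]
      exact ⟨Finset.mem_univ _, hw0deg, hw0d⟩
    have hM1card := Finset.card_erase_add_one hw0SL2
    rw [hM0] at eqb1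
    rw [hM1] at eqb2
    have hDsdom := dom1 hT h2 w0
    have hDsle : domNum T ≤ (univ.filter
        (fun v => T.dist w0 v % 3 = 1 ∨ (childless T w0 v ∧ T.dist w0 v % 3 = 0))).card := by
      have := domNum_le_of _ hDsdom
      rwa [Set.ncard_coe_finset] at this
    have hDscard : (univ.filter
        (fun v => T.dist w0 v % 3 = 1 ∨ (childless T w0 v ∧ T.dist w0 v % 3 = 0))).card
        = (univ.filter (fun v : V => T.dist w0 v % 3 = 1)).card
          + (univ.filter (fun v : V => T.degree v = 1 ∧ T.dist u v % 3 = 1)).card := by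
      rw [Finset.filter_or, Finset.card_union_of_disjoint, hM0]
      rw [Finset.disjoint_left]
      intro a ha hb
      rw [Finset.mem_filter] at ha hb
      have := hb.2.2
      omega
    omega
end
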